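/- arXiv:2601.18243 — 5 statements merged into one kernel-verified Lean document; each statement's English description precedes it below -/
import Mathlib

section
/- Let (H₁, A₁, ⟨·,·⟩₁, 𝓡₁, 𝓡̄₁) and (H₂, A₂, ⟨·,·⟩₂, 𝓡₂, 𝓡̄₂) be weakly quasitriangular dual pairs of bialgebras over a field k. Equip H = H₁ ⊗ H₂ and A = A₁ ⊗ A₂ with the tensor product bialgebra structures and the pairing ⟨h₁⊗h₂, a₁⊗a₂⟩ := ⟨h₁, a₁⟩₁ ⟨h₂, a₂⟩₂, and define 𝓡, 𝓡̄ : A → H by 𝓡(a₁⊗a₂) = 𝓡₁(a₁) ⊗ 𝓡₂(a₂) and 𝓡̄(a₁⊗a₂) = 𝓡̄₁(a₁) ⊗ 𝓡̄₂(a₂). Then (H, A, ⟨·,·⟩, 𝓡, 𝓡̄) is a weakly quasitriangular dual pair: 𝓡 and 𝓡̄ are algebra maps and anti-coalgebra maps, convolution-invertible with convolution inverses a₁⊗a₂ ↦ 𝓡₁⁻¹(a₁)⊗𝓡₂⁻¹(a₂) and a₁⊗a₂ ↦ 𝓡̄₁⁻¹(a₁)⊗𝓡̄₂⁻¹(a₂);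 they satisfy ⟨𝓡̄(a), b⟩ = ⟨𝓡⁻¹(b), a⟩ for all a, b ∈ A; and ∂ᴿ_h = 𝓡 ∗ ∂ᴸ_h ∗ 𝓡⁻¹ = 𝓡̄ ∗ ∂ᴸ_h ∗ 𝓡̄⁻¹ for all h ∈ H. Moreover, for h = h₁⊗h₂, as maps A → H one has ∂ᴿ_{h₁⊗h₂}(a₁⊗a₂) = ∂ᴿ_{h₁}(a₁) ⊗ ∂ᴿ_{h₂}(a₂) and ∂ᴸ_{h₁⊗h₂}(a₁⊗a₂) = ∂ᴸ_{h₁}(a₁) ⊗ ∂ᴸ_{h₂}(a₂). -/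
/-!
STATEMENT 2: the tensor product of two weakly quasitriangular dual pairs of
bialgebras is again a weakly quasitriangular dual pair, with the tensor pairing
`⟨h₁⊗h₂, a₁⊗a₂⟩ = ⟨h₁,a₁⟩₁⟨h₂,a₂⟩₂`, the maps `𝓡 = 𝓡₁ ⊗ 𝓡₂`, `𝓡̄ = 𝓡̄₁ ⊗ 𝓡̄₂`
(with convolution inverses `𝓡₁⁻¹ ⊗ 𝓡₂⁻¹`, `𝓡̄₁⁻¹ ⊗ 𝓡̄₂⁻¹`); moreover the left and
right differentiation operators factorize:
`∂ᴿ_{h₁⊗h₂}(a₁⊗a₂) = ∂ᴿ_{h₁}(a₁) ⊗ ∂ᴿ_{h₂}(a₂)` and likewise for `∂ᴸ`.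
-/

open scoped TensorProduct

noncomputable section

universe u

variable (k : Type u) [Field k]

section Conv

variable {C B : Type u} [AddCommGroup C] [Module k C] [Coalgebra k C]
  [Ring B] [Algebra k B]

/-- Convolution product of linear maps from a coalgebra to an algebra. -/
def conv (f g : C →ₗ[k] B) : C →ₗ[k] B :=
  LinearMap.mul' k B ∘ₗ TensorProduct.map f g ∘ₗ Coalgebra.comul

/-- The unit of the convolution algebra. -/
def convUnit : C →ₗ[k] B :=
  Algebra.linearMap k B ∘ₗ Coalgebra.counit

end Conv

section Defs

variable (H A : Type u) [Ring H] [Ring A] [Bialgebra k H] [Bialgebra k A]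

/-- A dual pairing of bialgebras `H, A`, as a linear form `p` on `H ⊗ A`:
`⟨hh′, a⟩ = ⟨h, a₍₁₎⟩⟨h′, a₍₂₎⟩`, `⟨h, ab⟩ = ⟨h₍₁₎, a⟩⟨h₍₂₎, b⟩`, `⟨1, a⟩ = ε(a)`,
`⟨h, 1⟩ = ε(h)`. -/
structure IsDualPairing (p : H ⊗[k] A →ₗ[k] k) : Prop where
  mul_left :
    p ∘ₗ TensorProduct.map (LinearMap.mul' k H) LinearMap.id
      = LinearMap.mul' k k ∘ₗ TensorProduct.map p p
          ∘ₗ (TensorProduct.tensorTensorTensorComm k H H A A).toLinearMap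
          ∘ₗ TensorProduct.map LinearMap.id (Coalgebra.comul (R := k))
  mul_right :
    p ∘ₗ TensorProduct.map LinearMap.id (LinearMap.mul' k A)
      = LinearMap.mul' k k ∘ₗ TensorProduct.map p p
          ∘ₗ (TensorProduct.tensorTensorTensorComm k H H A A).toLinearMap
          ∘ₗ TensorProduct.map (Coalgebra.comul (R := k)) LinearMap.id
  one_left : ∀ a : A, p (1 ⊗ₜ[k] a) = Coalgebra.counit (R := k) a
  one_right : ∀ h : H, p (h ⊗ₜ[k] 1) = Coalgebra.counit (R := k) h

/-- The bilinear map `x ↦ y ↦ (a ↦ p(x ⊗ a) • y)` used to define the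
differentiation operators. -/
def pairSmul (p : H ⊗[k] A →ₗ[k] k) : H →ₗ[k] H →ₗ[k] (A →ₗ[k] H) :=
  LinearMap.mk₂ k (fun x y => (TensorProduct.curry p x).smulRight y)
    (fun x x' y => by
      ext a
      simp [LinearMap.smulRight_apply, TensorProduct.curry_apply,
        TensorProduct.add_tmul, add_smul])
    (fun c x y => by
      ext a
      simp [LinearMap.smulRight_apply, TensorProduct.curry_apply,
        TensorProduct.smul_tmul', smul_smul])
    (fun x y y' => by
      ext a
      simp [LinearMap.smulRight_apply, smul_add])
    (fun c x y => by
      ext a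
      simp [LinearMap.smulRight_apply, smul_comm c])

/-- The left differentiation operator: `∂ᴸ_h(a) = ⟨h₍₁₎, a⟩ h₍₂₎`. -/
def dL (p : H ⊗[k] A →ₗ[k] k) (h : H) : A →ₗ[k] H :=
  TensorProduct.lift (pairSmul k H A p) (Coalgebra.comul (R := k) h)

/-- The right differentiation operator: `∂ᴿ_h(a) = h₍₁₎ ⟨h₍₂₎, a⟩`. -/
def dR (p : H ⊗[k] A →ₗ[k] k) (h : H) : A →ₗ[k] H :=
  TensorProduct.lift ((pairSmul k H A p).flip) (Coalgebra.comul (R := k) h)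

/-- A weakly quasitriangular dual pair `(H, A, ⟨·,·⟩, 𝓡, 𝓡̄)` (with chosen
convolution inverses `Rinv`, `Rbinv` of `𝓡`, `𝓡̄`): the maps `𝓡, 𝓡̄ : A → H` are
convolution-invertible algebra maps and anti-coalgebra maps satisfying
`⟨𝓡̄(a), b⟩ = ⟨𝓡⁻¹(b), a⟩` and `∂ᴿ_h = 𝓡 ∗ ∂ᴸ_h ∗ 𝓡⁻¹ = 𝓡̄ ∗ ∂ᴸ_h ∗ 𝓡̄⁻¹`. -/
structure IsWeaklyQuasitriangularDualPair (p : H ⊗[k] A →ₗ[k] k)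
    (R Rb Rinv Rbinv : A →ₗ[k] H) : Prop where
  pairing : IsDualPairing k H A p
  R_map_mul : ∀ a b : A, R (a * b) = R a * R b
  R_map_one : R 1 = 1
  Rb_map_mul : ∀ a b : A, Rb (a * b) = Rb a * Rb b
  Rb_map_one : Rb 1 = 1
  R_anti_coalg :
    Coalgebra.comul (R := k) ∘ₗ R
      = (TensorProduct.comm k H H).toLinearMap ∘ₗ TensorProduct.map R R
          ∘ₗ Coalgebra.comul (R := k)
  Rb_anti_coalg :
    Coalgebra.comul (R := k) ∘ₗ Rb
      = (TensorProduct.comm k H H).toLinearMap ∘ₗ TensorProduct.map Rb Rb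
          ∘ₗ Coalgebra.comul (R := k)
  R_conv_inv : conv k R Rinv = convUnit k ∧ conv k Rinv R = convUnit k
  Rb_conv_inv : conv k Rb Rbinv = convUnit k ∧ conv k Rbinv Rb = convUnit k
  pair_compat : ∀ a b : A, p (Rb a ⊗ₜ[k] b) = p (Rinv b ⊗ₜ[k] a)
  dR_eq_R_conv : ∀ h : H, dR k H A p h = conv k (conv k R (dL k H A p h)) Rinv
  dR_eq_Rb_conv : ∀ h : H, dR k H A p h = conv k (conv k Rb (dL k H A p h)) Rbinv

end Defs

set_option synthInstance.maxHeartbeats 1000000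
set_option maxHeartbeats 2000000

section Helpers

variable {k : Type u} [Field k]

section GenConv

variable {C B : Type u} [AddCommGroup C] [Module k C] [Coalgebra k C]
  [Ring B] [Algebra k B]

lemma conv_apply_repr (f g : C →ₗ[k] B) (a : C) {ι : Type*} (r : Coalgebra.Repr k a ι) :
    conv k f g a = ∑ i ∈ r.index, f (r.left i) * g (r.right i) := by
  simp only [conv, LinearMap.comp_apply]
  rw [← r.eq]
  simp [map_sum]

lemma convUnit_apply (a : C) :
    (convUnit k a : B) = algebraMap k B (Coalgebra.counit (R := k) a) := rfl

lemma conv_add_right (f g g' : C →ₗ[k] B) :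
    conv k f (g + g') = conv k f g + conv k f g' := by
  simp [conv, TensorProduct.map_add_right, LinearMap.add_comp, LinearMap.comp_add]

lemma conv_add_left (f f' g : C →ₗ[k] B) :
    conv k (f + f') g = conv k f g + conv k f' g := by
  simp [conv, TensorProduct.map_add_left, LinearMap.add_comp, LinearMap.comp_add]

lemma conv_zero_right (f : C →ₗ[k] B) : conv k f 0 = 0 := by
  simp [conv, TensorProduct.map_zero_right]

lemma conv_zero_left (f : C →ₗ[k] B) : conv k (0 : C →ₗ[k] B) f = 0 := by
  simp [conv, TensorProduct.map_zero_left]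

end GenConv

section TensorCoalg

variable {C₁ C₂ B₁ B₂ : Type u}
  [AddCommGroup C₁] [Module k C₁] [Coalgebra k C₁]
  [AddCommGroup C₂] [Module k C₂] [Coalgebra k C₂]
  [Ring B₁] [Algebra k B₁] [Ring B₂] [Algebra k B₂]

lemma comul_tmul_repr (a : C₁) (b : C₂) {ι κ : Type*} (r : Coalgebra.Repr k a ι)
    (s : Coalgebra.Repr k b κ) :
    Coalgebra.comul (R := k) (a ⊗ₜ[k] b)
      = ∑ i ∈ r.index, ∑ j ∈ s.index,
          (r.left i ⊗ₜ[k] s.left j) ⊗ₜ[k] (r.right i ⊗ₜ[k] s.right j) := by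
  have h : Coalgebra.comul (R := k) (a ⊗ₜ[k] b)
      = TensorProduct.tensorTensorTensorComm k C₁ C₁ C₂ C₂
          (TensorProduct.map Coalgebra.comul Coalgebra.comul (a ⊗ₜ[k] b)) := rfl
  rw [h, TensorProduct.map_tmul, ← r.eq, ← s.eq, TensorProduct.sum_tmul, map_sum]
  refine Finset.sum_congr rfl fun i _ => ?_
  rw [TensorProduct.tmul_sum, map_sum]
  exact Finset.sum_congr rfl fun j _ => by simp

/-- The Repr of a pure tensor built from Reprs of the factors. -/
def tensorRepr (a : C₁) (b : C₂) {ι κ : Type*} (r : Coalgebra.Repr k a ι)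
    (s : Coalgebra.Repr k b κ) :
    Coalgebra.Repr k (a ⊗ₜ[k] b) (ι × κ) where
  index := r.index ×ˢ s.index
  left := fun ij => r.left ij.1 ⊗ₜ[k] s.left ij.2
  right := fun ij => r.right ij.1 ⊗ₜ[k] s.right ij.2
  eq := by rw [Finset.sum_product, comul_tmul_repr a b r s]

lemma counit_tmul (a : C₁) (b : C₂) :
    Coalgebra.counit (R := k) (a ⊗ₜ[k] b)
      = Coalgebra.counit (R := k) a * Coalgebra.counit (R := k) b := by
  rw [TensorProduct.counit_tmul, smul_eq_mul, mul_comm]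

lemma conv_tmul (f₁ g₁ : C₁ →ₗ[k] B₁) (f₂ g₂ : C₂ →ₗ[k] B₂) (a : C₁) (b : C₂) :
    conv k (TensorProduct.map f₁ f₂) (TensorProduct.map g₁ g₂) (a ⊗ₜ[k] b)
      = conv k f₁ g₁ a ⊗ₜ[k] conv k f₂ g₂ b := by
  rw [conv_apply_repr _ _ _ (tensorRepr a b (Coalgebra.Repr.arbitrary k a)
    (Coalgebra.Repr.arbitrary k b)),
    conv_apply_repr f₁ g₁ a (Coalgebra.Repr.arbitrary k a),
    conv_apply_repr f₂ g₂ b (Coalgebra.Repr.arbitrary k b)]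
  dsimp only [tensorRepr]
  rw [Finset.sum_product, TensorProduct.sum_tmul]
  refine Finset.sum_congr rfl fun i _ => ?_
  rw [TensorProduct.tmul_sum]
  exact Finset.sum_congr rfl fun j _ => by
    simp [Algebra.TensorProduct.tmul_mul_tmul]

lemma conv_map_map (f₁ g₁ : C₁ →ₗ[k] B₁) (f₂ g₂ : C₂ →ₗ[k] B₂) :
    conv k (TensorProduct.map f₁ f₂) (TensorProduct.map g₁ g₂)
      = TensorProduct.map (conv k f₁ g₁) (conv k f₂ g₂) :=
  TensorProduct.ext' fun a b => (conv_tmul f₁ g₁ f₂ g₂ a b).trans (by simp)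

lemma map_convUnit :
    TensorProduct.map (convUnit k (C := C₁) (B := B₁)) (convUnit k (C := C₂) (B := B₂))
      = convUnit k := by
  refine TensorProduct.ext' fun a b => ?_
  simp only [TensorProduct.map_tmul, convUnit_apply, counit_tmul]
  rw [Algebra.TensorProduct.algebraMap_apply, Algebra.algebraMap_eq_smul_one (A := B₂),
    TensorProduct.tmul_smul, TensorProduct.smul_tmul', Algebra.smul_def, ← map_mul,
    mul_comm (Coalgebra.counit (R := k) b)]

end TensorCoalg


section GenPairing

variable {k : Type u} [Field k]
variable {H A : Type u} [Ring H] [Ring A] [Bialgebra k H] [Bialgebra k A]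

lemma dL_apply_repr (p : H ⊗[k] A →ₗ[k] k) (h : H) {ι : Type*} (r : Coalgebra.Repr k h ι)
    (a : A) :
    dL k H A p h a = ∑ i ∈ r.index, p (r.left i ⊗ₜ[k] a) • r.right i := by
  simp only [dL]
  rw [← r.eq, map_sum, LinearMap.sum_apply]
  exact Finset.sum_congr rfl fun i _ => by
    simp [pairSmul]

lemma dR_apply_repr (p : H ⊗[k] A →ₗ[k] k) (h : H) {ι : Type*} (r : Coalgebra.Repr k h ι)
    (a : A) :
    dR k H A p h a = ∑ i ∈ r.index, p (r.right i ⊗ₜ[k] a) • r.left i := by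
  simp only [dR]
  rw [← r.eq, map_sum, LinearMap.sum_apply]
  exact Finset.sum_congr rfl fun i _ => by
    simp [pairSmul]

lemma dL_zero (p : H ⊗[k] A →ₗ[k] k) : dL k H A p 0 = 0 := by
  simp [dL]

lemma dL_add (p : H ⊗[k] A →ₗ[k] k) (x y : H) :
    dL k H A p (x + y) = dL k H A p x + dL k H A p y := by
  simp [dL, map_add]

lemma dR_zero (p : H ⊗[k] A →ₗ[k] k) : dR k H A p 0 = 0 := by
  simp [dR]

lemma dR_add (p : H ⊗[k] A →ₗ[k] k) (x y : H) :
    dR k H A p (x + y) = dR k H A p x + dR k H A p y := by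
  simp [dR, map_add]

lemma IsDualPairing.mul_left_repr {p : H ⊗[k] A →ₗ[k] k} (hp : IsDualPairing k H A p)
    (x y : H) (a : A) {ι : Type*} (r : Coalgebra.Repr k a ι) :
    p ((x * y) ⊗ₜ[k] a) = ∑ i ∈ r.index, p (x ⊗ₜ[k] r.left i) * p (y ⊗ₜ[k] r.right i) := by
  have := LinearMap.congr_fun hp.mul_left ((x ⊗ₜ[k] y) ⊗ₜ[k] a)
  simp only [LinearMap.comp_apply, TensorProduct.map_tmul, LinearMap.id_coe, id_eq,
    LinearMap.mul'_apply, LinearEquiv.coe_coe] at this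
  rw [this, ← r.eq, TensorProduct.tmul_sum, map_sum, map_sum, map_sum]
  exact Finset.sum_congr rfl fun i _ => by
    simp [TensorProduct.tensorTensorTensorComm_tmul]

lemma IsDualPairing.mul_right_repr {p : H ⊗[k] A →ₗ[k] k} (hp : IsDualPairing k H A p)
    (x : H) (a b : A) {ι : Type*} (r : Coalgebra.Repr k x ι) :
    p (x ⊗ₜ[k] (a * b)) = ∑ i ∈ r.index, p (r.left i ⊗ₜ[k] a) * p (r.right i ⊗ₜ[k] b) := by
  have := LinearMap.congr_fun hp.mul_right (x ⊗ₜ[k] (a ⊗ₜ[k] b))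
  simp only [LinearMap.comp_apply, TensorProduct.map_tmul, LinearMap.id_coe, id_eq,
    LinearMap.mul'_apply, LinearEquiv.coe_coe] at this
  rw [this, ← r.eq, TensorProduct.sum_tmul, map_sum, map_sum, map_sum]
  exact Finset.sum_congr rfl fun i _ => by
    simp [TensorProduct.tensorTensorTensorComm_tmul]

lemma anti_coalg_repr {R : A →ₗ[k] H}
    (hR : Coalgebra.comul (R := k) ∘ₗ R
      = (TensorProduct.comm k H H).toLinearMap ∘ₗ TensorProduct.map R R
          ∘ₗ Coalgebra.comul (R := k))
    (a : A) {ι : Type*} (r : Coalgebra.Repr k a ι) :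
    Coalgebra.comul (R := k) (R a) = ∑ i ∈ r.index, R (r.right i) ⊗ₜ[k] R (r.left i) := by
  have := LinearMap.congr_fun hR a
  simp only [LinearMap.comp_apply, LinearEquiv.coe_coe] at this
  rw [this, ← r.eq, map_sum, map_sum]
  exact Finset.sum_congr rfl fun i _ => by simp

end GenPairing

end Helpers

section TensorPairing

variable {k : Type u} [Field k]
variable {H₁ H₂ A₁ A₂ : Type u} [Ring H₁] [Ring H₂] [Ring A₁] [Ring A₂]
  [Bialgebra k H₁] [Bialgebra k H₂] [Bialgebra k A₁] [Bialgebra k A₂]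

/-- The tensor product pairing. -/
def tensorPairing (p₁ : H₁ ⊗[k] A₁ →ₗ[k] k) (p₂ : H₂ ⊗[k] A₂ →ₗ[k] k) :
    (H₁ ⊗[k] H₂) ⊗[k] (A₁ ⊗[k] A₂) →ₗ[k] k :=
  LinearMap.mul' k k ∘ₗ TensorProduct.map p₁ p₂
    ∘ₗ (TensorProduct.tensorTensorTensorComm k H₁ H₂ A₁ A₂).toLinearMap

lemma tensorPairing_tmul (p₁ : H₁ ⊗[k] A₁ →ₗ[k] k) (p₂ : H₂ ⊗[k] A₂ →ₗ[k] k)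
    (x₁ : H₁) (x₂ : H₂) (a₁ : A₁) (a₂ : A₂) :
    tensorPairing p₁ p₂ ((x₁ ⊗ₜ[k] x₂) ⊗ₜ[k] (a₁ ⊗ₜ[k] a₂))
      = p₁ (x₁ ⊗ₜ[k] a₁) * p₂ (x₂ ⊗ₜ[k] a₂) := by
  simp [tensorPairing]

lemma dL_tensorPairing_tmul (p₁ : H₁ ⊗[k] A₁ →ₗ[k] k) (p₂ : H₂ ⊗[k] A₂ →ₗ[k] k)
    (x : H₁) (y : H₂) :
    dL k (H₁ ⊗[k] H₂) (A₁ ⊗[k] A₂) (tensorPairing p₁ p₂) (x ⊗ₜ[k] y)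
      = TensorProduct.map (dL k H₁ A₁ p₁ x) (dL k H₂ A₂ p₂ y) := by
  refine TensorProduct.ext' fun a b => ?_
  rw [dL_apply_repr _ _ (tensorRepr x y (Coalgebra.Repr.arbitrary k x)
      (Coalgebra.Repr.arbitrary k y)),
    TensorProduct.map_tmul,
    dL_apply_repr p₁ x (Coalgebra.Repr.arbitrary k x),
    dL_apply_repr p₂ y (Coalgebra.Repr.arbitrary k y)]
  dsimp only [tensorRepr]
  rw [Finset.sum_product, TensorProduct.sum_tmul]
  refine Finset.sum_congr rfl fun i _ => ?_
  rw [TensorProduct.tmul_sum]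
  refine Finset.sum_congr rfl fun j _ => ?_
  rw [tensorPairing_tmul]
  simp only [TensorProduct.smul_tmul', TensorProduct.tmul_smul, smul_smul]
  rw [mul_comm]

lemma dR_tensorPairing_tmul (p₁ : H₁ ⊗[k] A₁ →ₗ[k] k) (p₂ : H₂ ⊗[k] A₂ →ₗ[k] k)
    (x : H₁) (y : H₂) :
    dR k (H₁ ⊗[k] H₂) (A₁ ⊗[k] A₂) (tensorPairing p₁ p₂) (x ⊗ₜ[k] y)
      = TensorProduct.map (dR k H₁ A₁ p₁ x) (dR k H₂ A₂ p₂ y) := by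
  refine TensorProduct.ext' fun a b => ?_
  rw [dR_apply_repr _ _ (tensorRepr x y (Coalgebra.Repr.arbitrary k x)
      (Coalgebra.Repr.arbitrary k y)),
    TensorProduct.map_tmul,
    dR_apply_repr p₁ x (Coalgebra.Repr.arbitrary k x),
    dR_apply_repr p₂ y (Coalgebra.Repr.arbitrary k y)]
  dsimp only [tensorRepr]
  rw [Finset.sum_product, TensorProduct.sum_tmul]
  refine Finset.sum_congr rfl fun i _ => ?_
  rw [TensorProduct.tmul_sum]
  refine Finset.sum_congr rfl fun j _ => ?_
  rw [tensorPairing_tmul]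
  simp only [TensorProduct.smul_tmul', TensorProduct.tmul_smul, smul_smul]
  rw [mul_comm]

variable {p₁ : H₁ ⊗[k] A₁ →ₗ[k] k} {p₂ : H₂ ⊗[k] A₂ →ₗ[k] k}

lemma tensorPairing_isDualPairing (hp₁ : IsDualPairing k H₁ A₁ p₁)
    (hp₂ : IsDualPairing k H₂ A₂ p₂) :
    IsDualPairing k (H₁ ⊗[k] H₂) (A₁ ⊗[k] A₂) (tensorPairing p₁ p₂) := by
  constructor
  · -- mul_left
    ext x₁ x₂ y₁ y₂ a₁ a₂
    simp only [TensorProduct.AlgebraTensorModule.curry_apply, TensorProduct.curry_apply,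
      LinearMap.coe_restrictScalars, LinearMap.comp_apply, TensorProduct.map_tmul,
      LinearMap.id_coe, id_eq, LinearMap.mul'_apply, LinearEquiv.coe_coe,
      Algebra.TensorProduct.tmul_mul_tmul]
    rw [tensorPairing_tmul,
      hp₁.mul_left_repr x₁ y₁ a₁ (Coalgebra.Repr.arbitrary k a₁),
      hp₂.mul_left_repr x₂ y₂ a₂ (Coalgebra.Repr.arbitrary k a₂),
      comul_tmul_repr a₁ a₂ (Coalgebra.Repr.arbitrary k a₁) (Coalgebra.Repr.arbitrary k a₂),
      Finset.sum_mul_sum]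
    rw [TensorProduct.tmul_sum, map_sum, map_sum, map_sum]
    refine Finset.sum_congr rfl fun i _ => ?_
    rw [TensorProduct.tmul_sum, map_sum, map_sum, map_sum]
    refine Finset.sum_congr rfl fun j _ => ?_
    rw [TensorProduct.tensorTensorTensorComm_tmul, TensorProduct.map_tmul,
      LinearMap.mul'_apply, tensorPairing_tmul, tensorPairing_tmul]
    ring
  · -- mul_right
    ext x₁ x₂ a₁ a₂ b₁ b₂
    simp only [TensorProduct.AlgebraTensorModule.curry_apply, TensorProduct.curry_apply,
      LinearMap.coe_restrictScalars, LinearMap.comp_apply, TensorProduct.map_tmul,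
      LinearMap.id_coe, id_eq, LinearMap.mul'_apply, LinearEquiv.coe_coe,
      Algebra.TensorProduct.tmul_mul_tmul]
    rw [tensorPairing_tmul,
      hp₁.mul_right_repr x₁ a₁ b₁ (Coalgebra.Repr.arbitrary k x₁),
      hp₂.mul_right_repr x₂ a₂ b₂ (Coalgebra.Repr.arbitrary k x₂),
      comul_tmul_repr x₁ x₂ (Coalgebra.Repr.arbitrary k x₁) (Coalgebra.Repr.arbitrary k x₂),
      Finset.sum_mul_sum]
    rw [TensorProduct.sum_tmul, map_sum, map_sum, map_sum]
    refine Finset.sum_congr rfl fun i _ => ?_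
    rw [TensorProduct.sum_tmul, map_sum, map_sum, map_sum]
    refine Finset.sum_congr rfl fun j _ => ?_
    rw [TensorProduct.tensorTensorTensorComm_tmul, TensorProduct.map_tmul,
      LinearMap.mul'_apply, tensorPairing_tmul, tensorPairing_tmul]
    ring
  · -- one_left
    intro a
    induction a using TensorProduct.induction_on with
    | zero => simp
    | tmul a₁ a₂ =>
      rw [Algebra.TensorProduct.one_def, tensorPairing_tmul, hp₁.one_left, hp₂.one_left]
      exact (counit_tmul _ _).symm
    | add a b iha ihb => rw [TensorProduct.tmul_add, map_add, iha, ihb, map_add]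
  · -- one_right
    intro h
    induction h using TensorProduct.induction_on with
    | zero => simp
    | tmul h₁' h₂' =>
      rw [Algebra.TensorProduct.one_def, tensorPairing_tmul, hp₁.one_right, hp₂.one_right]
      exact (counit_tmul _ _).symm
    | add a b iha ihb => rw [TensorProduct.add_tmul, map_add, iha, ihb, map_add]

end TensorPairing


section Main

variable {k : Type u} [Field k]
variable {H₁ H₂ A₁ A₂ : Type u} [Ring H₁] [Ring H₂] [Ring A₁] [Ring A₂]
  [Bialgebra k H₁] [Bialgebra k H₂] [Bialgebra k A₁] [Bialgebra k A₂]
  {p₁ : H₁ ⊗[k] A₁ →ₗ[k] k} {p₂ : H₂ ⊗[k] A₂ →ₗ[k] k}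
  {R₁ Rb₁ Rinv₁ Rbinv₁ : A₁ →ₗ[k] H₁} {R₂ Rb₂ Rinv₂ Rbinv₂ : A₂ →ₗ[k] H₂}

lemma tensor_map_mul (f₁ : A₁ →ₗ[k] H₁) (f₂ : A₂ →ₗ[k] H₂)
    (hf₁ : ∀ a b : A₁, f₁ (a * b) = f₁ a * f₁ b)
    (hf₂ : ∀ a b : A₂, f₂ (a * b) = f₂ a * f₂ b) (a b : A₁ ⊗[k] A₂) :
    TensorProduct.map f₁ f₂ (a * b) = TensorProduct.map f₁ f₂ a * TensorProduct.map f₁ f₂ b := by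
  induction a using TensorProduct.induction_on with
  | zero => simp
  | tmul x y =>
    induction b using TensorProduct.induction_on with
    | zero => simp
    | tmul z w => simp [Algebra.TensorProduct.tmul_mul_tmul, hf₁, hf₂]
    | add u v ihu ihv => rw [mul_add, map_add, ihu, ihv, map_add, mul_add]
  | add u v ihu ihv => rw [add_mul, map_add, ihu, ihv, map_add, add_mul]

lemma tensor_anti_coalg (f₁ : A₁ →ₗ[k] H₁) (f₂ : A₂ →ₗ[k] H₂)
    (hf₁ : Coalgebra.comul (R := k) ∘ₗ f₁
      = (TensorProduct.comm k H₁ H₁).toLinearMap ∘ₗ TensorProduct.map f₁ f₁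
          ∘ₗ Coalgebra.comul (R := k))
    (hf₂ : Coalgebra.comul (R := k) ∘ₗ f₂
      = (TensorProduct.comm k H₂ H₂).toLinearMap ∘ₗ TensorProduct.map f₂ f₂
          ∘ₗ Coalgebra.comul (R := k)) :
    Coalgebra.comul (R := k) ∘ₗ TensorProduct.map f₁ f₂
      = (TensorProduct.comm k (H₁ ⊗[k] H₂) (H₁ ⊗[k] H₂)).toLinearMap
          ∘ₗ TensorProduct.map (TensorProduct.map f₁ f₂) (TensorProduct.map f₁ f₂)
          ∘ₗ Coalgebra.comul (R := k) := by
  refine TensorProduct.ext' fun a b => ?_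
  have r := Coalgebra.Repr.arbitrary k a
  have s := Coalgebra.Repr.arbitrary k b
  simp only [LinearMap.comp_apply, TensorProduct.map_tmul, LinearEquiv.coe_coe]
  rw [comul_tmul_repr (f₁ a) (f₂ b)
      ⟨r.index, fun i => f₁ (r.right i), fun i => f₁ (r.left i), (anti_coalg_repr hf₁ a r).symm⟩
      ⟨s.index, fun j => f₂ (s.right j), fun j => f₂ (s.left j), (anti_coalg_repr hf₂ b s).symm⟩,
    comul_tmul_repr a b r s]
  rw [map_sum, map_sum]
  refine Finset.sum_congr rfl fun i _ => ?_
  rw [map_sum, map_sum]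
  refine Finset.sum_congr rfl fun j _ => ?_
  simp

lemma tensor_conv_inv {f₁ g₁ : A₁ →ₗ[k] H₁} {f₂ g₂ : A₂ →ₗ[k] H₂}
    (hfg₁ : conv k f₁ g₁ = convUnit k) (hfg₂ : conv k f₂ g₂ = convUnit k) :
    conv k (TensorProduct.map f₁ f₂) (TensorProduct.map g₁ g₂) = convUnit k := by
  rw [conv_map_map, hfg₁, hfg₂, map_convUnit]

theorem tensorAux
    (h₁ : IsWeaklyQuasitriangularDualPair k H₁ A₁ p₁ R₁ Rb₁ Rinv₁ Rbinv₁)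
    (h₂ : IsWeaklyQuasitriangularDualPair k H₂ A₂ p₂ R₂ Rb₂ Rinv₂ Rbinv₂) :
    IsWeaklyQuasitriangularDualPair k (H₁ ⊗[k] H₂) (A₁ ⊗[k] A₂) (tensorPairing p₁ p₂)
      (TensorProduct.map R₁ R₂) (TensorProduct.map Rb₁ Rb₂)
      (TensorProduct.map Rinv₁ Rinv₂) (TensorProduct.map Rbinv₁ Rbinv₂) := by
  constructor
  case pairing => exact tensorPairing_isDualPairing h₁.pairing h₂.pairing
  case R_map_mul => exact tensor_map_mul R₁ R₂ h₁.R_map_mul h₂.R_map_mul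
  case R_map_one =>
    rw [Algebra.TensorProduct.one_def, TensorProduct.map_tmul, h₁.R_map_one, h₂.R_map_one,
      Algebra.TensorProduct.one_def]
  case Rb_map_mul => exact tensor_map_mul Rb₁ Rb₂ h₁.Rb_map_mul h₂.Rb_map_mul
  case Rb_map_one =>
    rw [Algebra.TensorProduct.one_def, TensorProduct.map_tmul, h₁.Rb_map_one, h₂.Rb_map_one,
      Algebra.TensorProduct.one_def]
  case R_anti_coalg => exact tensor_anti_coalg R₁ R₂ h₁.R_anti_coalg h₂.R_anti_coalg
  case Rb_anti_coalg => exact tensor_anti_coalg Rb₁ Rb₂ h₁.Rb_anti_coalg h₂.Rb_anti_coalg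
  case R_conv_inv =>
    exact ⟨tensor_conv_inv h₁.R_conv_inv.1 h₂.R_conv_inv.1,
      tensor_conv_inv h₁.R_conv_inv.2 h₂.R_conv_inv.2⟩
  case Rb_conv_inv =>
    exact ⟨tensor_conv_inv h₁.Rb_conv_inv.1 h₂.Rb_conv_inv.1,
      tensor_conv_inv h₁.Rb_conv_inv.2 h₂.Rb_conv_inv.2⟩
  case pair_compat =>
    intro a b
    induction a using TensorProduct.induction_on with
    | zero => simp
    | tmul a₁ a₂ =>
      induction b using TensorProduct.induction_on with
      | zero => simp
      | tmul b₁ b₂ =>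
        rw [TensorProduct.map_tmul, TensorProduct.map_tmul, tensorPairing_tmul,
          tensorPairing_tmul, h₁.pair_compat, h₂.pair_compat]
      | add u v ihu ihv =>
        rw [TensorProduct.tmul_add, map_add, ihu, ihv, map_add, TensorProduct.add_tmul,
          map_add]
    | add u v ihu ihv =>
      rw [map_add, TensorProduct.add_tmul, map_add, ihu, ihv, TensorProduct.tmul_add,
        map_add]
  case dR_eq_R_conv =>
    intro h
    induction h using TensorProduct.induction_on with
    | zero => rw [dR_zero, dL_zero, conv_zero_right, conv_zero_left]
    | tmul x y =>
      rw [dR_tensorPairing_tmul, dL_tensorPairing_tmul, conv_map_map, conv_map_map,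
        ← h₁.dR_eq_R_conv, ← h₂.dR_eq_R_conv]
    | add u v ihu ihv =>
      rw [dR_add, dL_add, conv_add_right, conv_add_left, ihu, ihv]
  case dR_eq_Rb_conv =>
    intro h
    induction h using TensorProduct.induction_on with
    | zero => rw [dR_zero, dL_zero, conv_zero_right, conv_zero_left]
    | tmul x y =>
      rw [dR_tensorPairing_tmul, dL_tensorPairing_tmul, conv_map_map, conv_map_map,
        ← h₁.dR_eq_Rb_conv, ← h₂.dR_eq_Rb_conv]
    | add u v ihu ihv =>
      rw [dR_add, dL_add, conv_add_right, conv_add_left, ihu, ihv]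

end Main

theorem tensorProduct_isWeaklyQuasitriangularDualPair {k : Type u} [Field k]
    {H₁ H₂ A₁ A₂ : Type u} [Ring H₁] [Ring H₂] [Ring A₁] [Ring A₂]
    [Bialgebra k H₁] [Bialgebra k H₂] [Bialgebra k A₁] [Bialgebra k A₂]
    {p₁ : H₁ ⊗[k] A₁ →ₗ[k] k} {p₂ : H₂ ⊗[k] A₂ →ₗ[k] k}
    {R₁ Rb₁ Rinv₁ Rbinv₁ : A₁ →ₗ[k] H₁} {R₂ Rb₂ Rinv₂ Rbinv₂ : A₂ →ₗ[k] H₂}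
    (h₁ : IsWeaklyQuasitriangularDualPair k H₁ A₁ p₁ R₁ Rb₁ Rinv₁ Rbinv₁)
    (h₂ : IsWeaklyQuasitriangularDualPair k H₂ A₂ p₂ R₂ Rb₂ Rinv₂ Rbinv₂) :
    -- the tensor pairing `⟨h₁⊗h₂, a₁⊗a₂⟩ = ⟨h₁,a₁⟩₁⟨h₂,a₂⟩₂`
    let p : (H₁ ⊗[k] H₂) ⊗[k] (A₁ ⊗[k] A₂) →ₗ[k] k :=
      LinearMap.mul' k k ∘ₗ TensorProduct.map p₁ p₂
        ∘ₗ (TensorProduct.tensorTensorTensorComm k H₁ H₂ A₁ A₂).toLinearMap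
    -- `𝓡 = 𝓡₁ ⊗ 𝓡₂`, `𝓡̄ = 𝓡̄₁ ⊗ 𝓡̄₂`, and their convolution inverses
    (∀ h₁' h₂' a₁ a₂, p ((h₁' ⊗ₜ[k] h₂') ⊗ₜ[k] (a₁ ⊗ₜ[k] a₂))
        = p₁ (h₁' ⊗ₜ[k] a₁) * p₂ (h₂' ⊗ₜ[k] a₂)) ∧
    IsWeaklyQuasitriangularDualPair k (H₁ ⊗[k] H₂) (A₁ ⊗[k] A₂) p
      (TensorProduct.map R₁ R₂) (TensorProduct.map Rb₁ Rb₂)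
      (TensorProduct.map Rinv₁ Rinv₂) (TensorProduct.map Rbinv₁ Rbinv₂) ∧
    -- factorization of the differentiation operators on pure tensors
    (∀ (h₁' : H₁) (h₂' : H₂) (a₁ : A₁) (a₂ : A₂),
      dR k (H₁ ⊗[k] H₂) (A₁ ⊗[k] A₂) p (h₁' ⊗ₜ[k] h₂') (a₁ ⊗ₜ[k] a₂)
        = dR k H₁ A₁ p₁ h₁' a₁ ⊗ₜ[k] dR k H₂ A₂ p₂ h₂' a₂) ∧
    (∀ (h₁' : H₁) (h₂' : H₂) (a₁ : A₁) (a₂ : A₂),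
      dL k (H₁ ⊗[k] H₂) (A₁ ⊗[k] A₂) p (h₁' ⊗ₜ[k] h₂') (a₁ ⊗ₜ[k] a₂)
        = dL k H₁ A₁ p₁ h₁' a₁ ⊗ₜ[k] dL k H₂ A₂ p₂ h₂' a₂) := by
  intro p
  refine ⟨fun x₁ x₂ a₁ a₂ => tensorPairing_tmul p₁ p₂ x₁ x₂ a₁ a₂,
    tensorAux h₁ h₂,
    fun x y a b => ?_, fun x y a b => ?_⟩
  · rw [show p = tensorPairing p₁ p₂ from rfl, dR_tensorPairing_tmul, TensorProduct.map_tmul]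
  · rw [show p = tensorPairing p₁ p₂ from rfl, dL_tensorPairing_tmul, TensorProduct.map_tmul]

end
end

section
/- Let k be a field, and for t = 1,…,n let Rₜ be a square matrix over k with rows and columns indexed by pairs from {1,…,mₜ}, Pₜ the flip matrix on {1,…,mₜ}. Let R_⊗ be the tensor R-matrix of R₁,…,Rₙ and P the flip matrix on the index set {1,…,m₁} × ⋯ × {1,…,mₙ}. For each t define the matrix Mₜ entrywise by (Mₜ)^{(i₁…iₙ)(j₁…jₙ)}_{(k₁…kₙ)(l₁…lₙ)} = (Pₜ Rₜ)^{i_t j_t}_{k_t l_t} · ∏_{s ≠ t} δ_{i_s k_s} δ_{j_s l_s}. Then: (a) M_s Mₜ = Mₜ M_s for all s, t; (b) P·R_⊗ = M₁ M₂ ⋯ Mₙ; (c) each Mₜ is conjugate by a permutation matrix to the Kronecker product of Pₜ Rₜ with an identity matrix; consequently, for every polynomial f over k, f(Mₜ) = 0 if and only if f(Pₜ Rₜ) = 0. -/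
/-!
STATEMENT 5: the factor matrices `Mₜ` of the braiding of a tensor R-matrix:
(a) they pairwise commute; (b) their ordered product is `P·R_⊗`;
(c) each `Mₜ` is conjugate by a permutation matrix (i.e. a reindexing of rows and
columns) to the Kronecker product of `Pₜ Rₜ` with an identity matrix; consequently,
for every polynomial `f` over `k`, `f(Mₜ) = 0 ↔ f(Pₜ Rₜ) = 0`.
-/

open Matrix Polynomial
open scoped Kronecker

/-- The flip matrix `P` on an index set `S`: `P^{ij}_{kl} = δ_{il} δ_{jk}`. -/
def flipMatrix (k S : Type*) [Semiring k] [DecidableEq S] :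
    Matrix (S × S) (S × S) k :=
  fun p q => if p.1 = q.2 ∧ p.2 = q.1 then 1 else 0

/-- The tensor R-matrix of a family `R₁,…,Rₙ`. -/
def tensorRFamily {k : Type*} [CommRing k] {n : ℕ} {m : Fin n → ℕ}
    (R : ∀ t, Matrix (Fin (m t) × Fin (m t)) (Fin (m t) × Fin (m t)) k) :
    Matrix (((t : Fin n) → Fin (m t)) × ((t : Fin n) → Fin (m t)))
           (((t : Fin n) → Fin (m t)) × ((t : Fin n) → Fin (m t))) k :=
  fun p q => ∏ t, R t (p.1 t, p.2 t) (q.1 t, q.2 t)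

/-- The factor matrix `Mₜ`, with entries
`(Mₜ)^{(i₁…iₙ)(j₁…jₙ)}_{(k₁…kₙ)(l₁…lₙ)} = (PₜRₜ)^{iₜjₜ}_{kₜlₜ} ∏_{s≠t} δ_{iₛkₛ} δ_{jₛlₛ}`. -/
def factorMatrix {k : Type*} [Field k] {n : ℕ} {m : Fin n → ℕ}
    (R : ∀ t, Matrix (Fin (m t) × Fin (m t)) (Fin (m t) × Fin (m t)) k) (t : Fin n) :
    Matrix (((s : Fin n) → Fin (m s)) × ((s : Fin n) → Fin (m s)))
           (((s : Fin n) → Fin (m s)) × ((s : Fin n) → Fin (m s))) k :=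
  fun p q => (flipMatrix k (Fin (m t)) * R t) (p.1 t, p.2 t) (q.1 t, q.2 t) *
    ∏ s ∈ Finset.univ.erase t, (if p.1 s = q.1 s ∧ p.2 s = q.2 s then (1 : k) else 0)

section aux
variable {k : Type*} [CommRing k] {n : ℕ} {m : Fin n → ℕ}

def pairPiEquiv : (((t : Fin n) → Fin (m t)) × ((t : Fin n) → Fin (m t))) ≃
    ((t : Fin n) → Fin (m t) × Fin (m t)) where
  toFun p t := (p.1 t, p.2 t)
  invFun f := (fun t => (f t).1, fun t => (f t).2)
  left_inv _ := rfl
  right_inv _ := rfl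

lemma tensorRFamily_one : tensorRFamily (k := k) (m := m) (fun _ => 1) = 1 := by
  ext p q
  simp only [tensorRFamily, Matrix.one_apply, Finset.prod_boole, Prod.mk.injEq]
  congr 1
  simp [Prod.ext_iff, funext_iff, forall_and]

lemma tensorRFamily_mul (F G : ∀ t, Matrix (Fin (m t) × Fin (m t)) (Fin (m t) × Fin (m t)) k) :
    tensorRFamily F * tensorRFamily G = tensorRFamily (fun t => F t * G t) := by
  ext p q
  simp only [tensorRFamily, Matrix.mul_apply]
  rw [Finset.prod_univ_sum]
  exact Fintype.sum_equiv pairPiEquiv _ _ (fun j => by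
    rw [← Finset.prod_mul_distrib]; rfl)

end aux


section aux2
variable {k : Type*} [Field k] {n : ℕ} {m : Fin n → ℕ}
  (R : ∀ t, Matrix (Fin (m t) × Fin (m t)) (Fin (m t) × Fin (m t)) k)

lemma flip_eq_tensor :
    flipMatrix k ((t : Fin n) → Fin (m t)) = tensorRFamily (fun t => flipMatrix k (Fin (m t))) := by
  ext p q
  simp only [flipMatrix, tensorRFamily, Finset.prod_boole]
  congr 1
  simp [Prod.ext_iff, funext_iff, forall_and]

lemma factorMatrix_eq (t : Fin n) :
    factorMatrix R t =
      tensorRFamily (Function.update (fun u => (1 : Matrix (Fin (m u) × Fin (m u)) (Fin (m u) × Fin (m u)) k)) t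
        (flipMatrix k (Fin (m t)) * R t)) := by
  ext p q
  simp only [factorMatrix, tensorRFamily]
  rw [← Finset.mul_prod_erase _ _ (Finset.mem_univ t), Function.update_self]
  congr 1
  refine Finset.prod_congr rfl fun s hs => ?_
  rw [Function.update_of_ne (Finset.ne_of_mem_erase hs)]
  simp [Matrix.one_apply, Prod.ext_iff]

lemma prod_ofFn_eq_single {M : Type*} [Monoid M] : ∀ {N : ℕ} (g : Fin N → M) (t : Fin N),
    (∀ i, i ≠ t → g i = 1) → (List.ofFn g).prod = g t := by
  intro N
  induction N with
  | zero => exact fun g t => absurd t.2 (by omega)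
  | succ N ih =>
    intro g t hg
    rw [List.ofFn_succ, List.prod_cons]
    rcases Fin.eq_zero_or_eq_succ t with rfl | ⟨j, rfl⟩
    · rw [List.prod_eq_one, mul_one]
      intro x hx
      obtain ⟨i, rfl⟩ := List.mem_ofFn.mp hx
      exact hg _ (Fin.succ_ne_zero i)
    · rw [hg 0 (Fin.succ_ne_zero j).symm, one_mul]
      exact ih _ j fun i hi => hg i.succ (fun h => hi (Fin.succ_injective _ h))

lemma prod_ofFn_tensor {N : ℕ}
    (E : Fin N → ∀ t, Matrix (Fin (m t) × Fin (m t)) (Fin (m t) × Fin (m t)) k) :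
    (List.ofFn fun i => tensorRFamily (E i)).prod
      = tensorRFamily (fun u => (List.ofFn fun i => E i u).prod) := by
  induction N with
  | zero => simp [tensorRFamily_one.symm]
  | succ N ih =>
    rw [List.ofFn_succ, List.prod_cons, ih, tensorRFamily_mul]
    exact congrArg tensorRFamily (funext fun u => by rw [List.ofFn_succ, List.prod_cons])

end aux2

section aux3
variable {k : Type*} [Field k] {n : ℕ} {m : Fin n → ℕ}
  (R : ∀ t, Matrix (Fin (m t) × Fin (m t)) (Fin (m t) × Fin (m t)) k)

def splitEquiv (t : Fin n) :
    (((s : Fin n) → Fin (m s)) × ((s : Fin n) → Fin (m s)))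
      ≃ (Fin (m t) × Fin (m t)) ×
        (((s : {s : Fin n // s ≠ t}) → Fin (m s)) × ((s : {s : Fin n // s ≠ t}) → Fin (m s))) :=
  (Equiv.prodCongr (Equiv.piSplitAt t _) (Equiv.piSplitAt t _)).trans
    (Equiv.prodProdProdComm _ _ _ _)

lemma factorMatrix_reindex (t : Fin n) :
    factorMatrix R t = Matrix.reindex (splitEquiv t).symm (splitEquiv t).symm
      ((flipMatrix k (Fin (m t)) * R t) ⊗ₖ
        (1 : Matrix
          (((s : {s : Fin n // s ≠ t}) → Fin (m s)) × ((s : {s : Fin n // s ≠ t}) → Fin (m s)))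
          (((s : {s : Fin n // s ≠ t}) → Fin (m s)) × ((s : {s : Fin n // s ≠ t}) → Fin (m s)))
          k)) := by
  ext p q
  simp only [Matrix.reindex_apply, Matrix.submatrix_apply, Equiv.symm_symm,
    Matrix.kroneckerMap_apply, factorMatrix]
  congr 1
  rw [Finset.prod_boole, Matrix.one_apply]
  congr 1
  simp only [Finset.mem_erase, Finset.mem_univ, and_true, splitEquiv, Equiv.trans_apply,
    Equiv.prodCongr_apply, Equiv.prodProdProdComm_apply, Prod.map, Equiv.piSplitAt_apply,
    Prod.ext_iff, funext_iff, Subtype.forall]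
  exact propext forall₂_and

lemma kron_one_pow {α β : Type*} [Fintype α] [DecidableEq α] [Fintype β] [DecidableEq β]
    (A : Matrix α α k) (N : ℕ) :
    (A ⊗ₖ (1 : Matrix β β k)) ^ N = (A ^ N) ⊗ₖ 1 := by
  induction N with
  | zero => simp [Matrix.one_kronecker_one]
  | succ N ih => rw [pow_succ, pow_succ, ih, ← Matrix.mul_kronecker_mul, Matrix.one_mul]

lemma aeval_kron_one {α β : Type*} [Fintype α] [DecidableEq α] [Fintype β] [DecidableEq β]
    (A : Matrix α α k) (f : Polynomial k) :
    Polynomial.aeval (A ⊗ₖ (1 : Matrix β β k)) f = (Polynomial.aeval A f) ⊗ₖ 1 := by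
  induction f using Polynomial.induction_on' with
  | add p q hp hq => rw [map_add, map_add, hp, hq, Matrix.add_kronecker]
  | monomial N a =>
    rw [Polynomial.aeval_monomial, Polynomial.aeval_monomial, kron_one_pow,
      Algebra.algebraMap_eq_smul_one, Algebra.algebraMap_eq_smul_one,
      smul_mul_assoc, smul_mul_assoc, one_mul, one_mul, Matrix.smul_kronecker]

lemma kron_one_eq_zero_iff {α β : Type*} [Fintype α] [DecidableEq α] [Fintype β] [DecidableEq β]
    [Nonempty β] (A : Matrix α α k) :
    A ⊗ₖ (1 : Matrix β β k) = 0 ↔ A = 0 := by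
  constructor
  · intro h
    ext i j
    have := congrFun (congrFun h (i, Classical.arbitrary β)) (j, Classical.arbitrary β)
    simpa [Matrix.kroneckerMap_apply, Matrix.one_apply] using this
  · rintro rfl
    simp [Matrix.zero_kronecker]

end aux3


theorem factorMatrix_props {k : Type*} [Field k] {n : ℕ} {m : Fin n → ℕ}
    (hm : ∀ t, 0 < m t)
    (R : ∀ t, Matrix (Fin (m t) × Fin (m t)) (Fin (m t) × Fin (m t)) k) :
    -- (a) the factor matrices pairwise commute
    (∀ s t : Fin n, factorMatrix R s * factorMatrix R t
        = factorMatrix R t * factorMatrix R s) ∧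
    -- (b) their ordered product `M₁ M₂ ⋯ Mₙ` is the braiding `P·R_⊗`
    (flipMatrix k ((t : Fin n) → Fin (m t)) * tensorRFamily R
        = (List.ofFn (factorMatrix R)).prod) ∧
    -- (c) each `Mₜ` is a reindexing (conjugation by a permutation matrix) of the
    -- Kronecker product of `Pₜ Rₜ` with an identity matrix ...
    (∀ t : Fin n, ∃ e : (((s : Fin n) → Fin (m s)) × ((s : Fin n) → Fin (m s)))
          ≃ (Fin (m t) × Fin (m t)) ×
            (((s : {s : Fin n // s ≠ t}) → Fin (m s)) × ((s : {s : Fin n // s ≠ t}) → Fin (m s))),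
        factorMatrix R t = Matrix.reindex e.symm e.symm
          ((flipMatrix k (Fin (m t)) * R t) ⊗ₖ
            (1 : Matrix
              (((s : {s : Fin n // s ≠ t}) → Fin (m s)) × ((s : {s : Fin n // s ≠ t}) → Fin (m s)))
              (((s : {s : Fin n // s ≠ t}) → Fin (m s)) × ((s : {s : Fin n // s ≠ t}) → Fin (m s)))
              k))) ∧
    -- ... consequently `f(Mₜ) = 0 ↔ f(Pₜ Rₜ) = 0` for every polynomial `f`
    (∀ t : Fin n, ∀ f : Polynomial k,
      Polynomial.aeval (factorMatrix R t) f = 0 ↔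
        Polynomial.aeval (flipMatrix k (Fin (m t)) * R t) f = 0) := by
  classical
  have key : ∀ t : Fin n, factorMatrix R t =
      tensorRFamily (Function.update
        (fun u => (1 : Matrix (Fin (m u) × Fin (m u)) (Fin (m u) × Fin (m u)) k)) t
        (flipMatrix k (Fin (m t)) * R t)) := factorMatrix_eq R
  refine ⟨?_, ?_, ?_, ?_⟩
  · -- (a)
    intro s t
    rcases eq_or_ne s t with rfl | hst
    · rfl
    rw [key, key, tensorRFamily_mul, tensorRFamily_mul]
    refine congrArg tensorRFamily (funext fun u => ?_)
    rcases eq_or_ne u s with rfl | hus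
    · simp [Function.update_of_ne hst]
    rcases eq_or_ne u t with rfl | hut
    · simp [Function.update_of_ne hus]
    · simp [Function.update_of_ne hus, Function.update_of_ne hut]
  · -- (b)
    rw [flip_eq_tensor, tensorRFamily_mul]
    have : List.ofFn (factorMatrix R) = List.ofFn (fun t => tensorRFamily
        (Function.update (fun u => (1 : Matrix (Fin (m u) × Fin (m u)) (Fin (m u) × Fin (m u)) k))
          t (flipMatrix k (Fin (m t)) * R t))) := by
      congr 1
      funext t
      exact key t
    rw [this, prod_ofFn_tensor]
    refine congrArg tensorRFamily (funext fun u => ?_)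
    rw [prod_ofFn_eq_single _ u]
    · rw [Function.update_self]
    · intro i hi
      rw [Function.update_of_ne (Ne.symm hi)]
  · -- (c), first part
    intro t
    exact ⟨splitEquiv t, factorMatrix_reindex R t⟩
  · -- (c), second part
    intro t f
    haveI : Nonempty (((s : {s : Fin n // s ≠ t}) → Fin (m s)) ×
        ((s : {s : Fin n // s ≠ t}) → Fin (m s))) :=
      ⟨(fun s => ⟨0, hm s⟩, fun s => ⟨0, hm s⟩)⟩
    rw [factorMatrix_reindex R t, ← Matrix.reindexAlgEquiv_apply k _,
      Polynomial.aeval_algHom_apply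
        (Matrix.reindexAlgEquiv k _ (splitEquiv t).symm : _ ≃ₐ[k] _) _ f]
    rw [show (0 : Matrix _ _ k) = (Matrix.reindexAlgEquiv k _ (splitEquiv t).symm) 0 by
      simp]
    rw [(Matrix.reindexAlgEquiv k _ (splitEquiv t).symm).injective.eq_iff,
      aeval_kron_one, kron_one_eq_zero_iff]
end

section
/- Fix integers n, m ≥ 1 and a unit q in a field k with q⁴ ≠ 1. Let R be the tensor R-matrix of R_q(n) and R_q(m), with rows and columns indexed by pairs from S = {1,…,n} × {1,…,m}, and let P be the flip matrix on S. Then (P·R + Id)(P·R − q²·Id)(P·R − q⁻²·Id) = 0. -/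
/-!
STATEMENT 9: For `n, m ≥ 1` and a unit `q` with `q⁴ ≠ 1`, the tensor R-matrix `R` of
`R_q(n)` and `R_q(m)` satisfies `(P·R + Id)(P·R − q²·Id)(P·R − q⁻²·Id) = 0`,
where `P` is the flip matrix on `S = {1,…,n} × {1,…,m}`.
-/

open Matrix Kronecker

/-- The type-A R-matrix `R_q(n)`. -/
def typeAR {k : Type*} [Field k] (q : k) (n : ℕ) :
    Matrix (Fin n × Fin n) (Fin n × Fin n) k :=
  fun p r =>
    (if p.1 = p.2 then q else 1) * (if p.1 = r.1 ∧ p.2 = r.2 then 1 else 0) +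
    (q - q⁻¹) * (if p.1 = r.2 ∧ p.2 = r.1 ∧ p.1 < p.2 then 1 else 0)

/-- The tensor R-matrix of two R-matrices, with entries
`R^{(i₁i₂)(j₁j₂)}_{(k₁k₂)(l₁l₂)} = (R₁)^{i₁j₁}_{k₁l₁} (R₂)^{i₂j₂}_{k₂l₂}`. -/
def tensorR {k : Type*} [CommRing k] {S₁ S₂ : Type*}
    (R₁ : Matrix (S₁ × S₁) (S₁ × S₁) k) (R₂ : Matrix (S₂ × S₂) (S₂ × S₂) k) :
    Matrix ((S₁ × S₂) × (S₁ × S₂)) ((S₁ × S₂) × (S₁ × S₂)) k :=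
  fun p q => R₁ (p.1.1, p.2.1) (q.1.1, q.2.1) * R₂ (p.1.2, p.2.2) (q.1.2, q.2.2)

lemma flip_mul_apply {k S : Type*} [CommRing k] [DecidableEq S] [Fintype S]
    (R : Matrix (S × S) (S × S) k) (p r : S × S) :
    (flipMatrix k S * R) p r = R (p.2, p.1) r := by
  rw [mul_apply, Fintype.sum_prod_type]
  simp [flipMatrix, Prod.ext_iff, ite_and]

set_option maxHeartbeats 1000000 in
lemma hecke {k : Type*} [Field k] (q : k) (hq : q ≠ 0) (n : ℕ) :
    (flipMatrix k (Fin n) * typeAR q n) * (flipMatrix k (Fin n) * typeAR q n)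
      = (q - q⁻¹) • (flipMatrix k (Fin n) * typeAR q n) + 1 := by
  ext x y
  obtain ⟨a, b⟩ := x
  obtain ⟨c, d⟩ := y
  rw [mul_apply]
  simp only [flip_mul_apply, Matrix.add_apply, Matrix.smul_apply, one_apply, smul_eq_mul]
  rw [Fintype.sum_prod_type]
  simp only [typeAR, ite_and, mul_ite, ite_mul, mul_one, one_mul, mul_zero, zero_mul,
    add_mul, mul_add, Finset.sum_add_distrib, Finset.sum_ite_eq, Finset.sum_ite_eq',
    Finset.mem_univ, if_true, Prod.mk.injEq, Prod.ext_iff]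
  split_ifs <;> first | (exfalso; omega) | ring1 | (field_simp <;> ring1)

lemma cube {k M : Type*} [CommRing k] [Ring M] [Algebra k M]
    (A B : M) (a c d : k) (hcd : c * d = 1) (hsum : c + d = a ^ 2 + 2)
    (hAB : A * B = B * A) (hA : A * A = a • A + 1) (hB : B * B = a • B + 1) :
    (A * B + 1) * (A * B - c • 1) * (A * B - d • 1) = 0 := by
  have h1 : A * (A * B) = a • (A * B) + B := by
    rw [← mul_assoc, hA, add_mul, smul_mul_assoc, one_mul]
  have h2 : B * (A * B) = a • (A * B) + A := by
    rw [← mul_assoc, ← hAB, mul_assoc, hB, mul_add, mul_smul_comm, mul_one]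
  have hN2 : (A * B) * (A * B) = (a ^ 2) • (A * B) + a • A + a • B + 1 := by
    calc (A * B) * (A * B) = A * (B * (A * B)) := by rw [mul_assoc]
    _ = A * (a • (A * B) + A) := by rw [h2]
    _ = a • (A * (A * B)) + A * A := by rw [mul_add, mul_smul_comm]
    _ = a • (a • (A * B) + B) + (a • A + 1) := by rw [h1, hA]
    _ = (a ^ 2) • (A * B) + a • A + a • B + 1 := by
        rw [smul_add, smul_smul, ← sq]; abel
  have hab : a • A + a • B = (A * B) * (A * B) - (a ^ 2) • (A * B) - 1 := by rw [hN2]; abel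
  have hN3 : (A * B) * (A * B) * (A * B)
      = (a ^ 2 + 1) • ((A * B) * (A * B)) + (a ^ 2 + 1) • (A * B) - 1 := by
    calc (A * B) * (A * B) * (A * B)
        = ((a ^ 2) • (A * B) + a • A + a • B + 1) * (A * B) := by rw [hN2]
    _ = (a ^ 2) • ((A * B) * (A * B)) + a • (A * (A * B)) + a • (B * (A * B)) + (A * B) := by
        simp only [add_mul, smul_mul_assoc, one_mul]
    _ = (a ^ 2) • ((A * B) * (A * B)) + a • (a • (A * B) + B) + a • (a • (A * B) + A)
          + (A * B) := by rw [h1, h2]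
    _ = (a ^ 2) • ((A * B) * (A * B)) + (a ^ 2) • (A * B) + (a ^ 2) • (A * B)
          + (a • A + a • B) + (A * B) := by
        simp only [smul_add, smul_smul, ← sq]; abel
    _ = (a ^ 2) • ((A * B) * (A * B)) + (a ^ 2) • (A * B) + (a ^ 2) • (A * B)
          + ((A * B) * (A * B) - (a ^ 2) • (A * B) - 1) + (A * B) := by rw [hab]
    _ = (a ^ 2 + 1) • ((A * B) * (A * B)) + (a ^ 2 + 1) • (A * B) - 1 := by
        simp only [add_smul, one_smul]; abel
  have expand : (A * B + 1) * (A * B - c • 1) * (A * B - d • 1)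
      = (A * B) * (A * B) * (A * B) - (c + d) • ((A * B) * (A * B)) + (c * d) • (A * B)
        + (A * B) * (A * B) - (c + d) • (A * B) + (c * d) • (1 : M) := by
    simp only [add_mul, mul_add, sub_mul, mul_sub, smul_mul_assoc, mul_smul_comm,
      smul_add, smul_sub, smul_smul, add_smul, one_mul, mul_one, mul_comm d c]
    abel
  rw [expand, hcd, hsum, hN3]
  simp only [add_smul, one_smul, smul_add, smul_sub]
  module

section assemble

variable {k : Type*} [Field k] (q : k) (n m : ℕ)

/-- The middle-swap reindexing equivalence. -/
abbrev midSwap (n m : ℕ) :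
    ((Fin n × Fin m) × (Fin n × Fin m)) ≃ ((Fin n × Fin n) × (Fin m × Fin m)) :=
  Equiv.prodProdProdComm (Fin n) (Fin m) (Fin n) (Fin m)

lemma flip_decomp :
    flipMatrix k (Fin n × Fin m)
      = reindex (midSwap n m).symm (midSwap n m).symm
          (flipMatrix k (Fin n) ⊗ₖ flipMatrix k (Fin m)) := by
  ext p r
  obtain ⟨⟨i1, i2⟩, j1, j2⟩ := p
  obtain ⟨⟨k1, k2⟩, l1, l2⟩ := r
  simp only [flipMatrix, reindex_apply, submatrix_apply, Equiv.symm_symm,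
    Equiv.prodProdProdComm_apply, kroneckerMap_apply, Prod.ext_iff, ite_and, mul_ite,
    ite_mul, one_mul, mul_one, zero_mul, mul_zero]
  split_ifs <;> simp_all

lemma tensorR_decomp {S₁ S₂ : Type*} [DecidableEq S₁] [DecidableEq S₂]
    (R₁ : Matrix (S₁ × S₁) (S₁ × S₁) k) (R₂ : Matrix (S₂ × S₂) (S₂ × S₂) k) :
    tensorR R₁ R₂
      = reindex (Equiv.prodProdProdComm S₁ S₂ S₁ S₂).symm
          (Equiv.prodProdProdComm S₁ S₂ S₁ S₂).symm (R₁ ⊗ₖ R₂) := by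
  ext p r
  rfl

end assemble

theorem tensorR_typeA_min_poly {k : Type*} [Field k] (q : k) (hq : IsUnit q)
    (hq4 : q ^ 4 ≠ 1) (n m : ℕ) (hn : 1 ≤ n) (hm : 1 ≤ m) :
    (flipMatrix k (Fin n × Fin m) * tensorR (typeAR q n) (typeAR q m)
        + (1 : Matrix ((Fin n × Fin m) × (Fin n × Fin m)) ((Fin n × Fin m) × (Fin n × Fin m)) k)) *
      (flipMatrix k (Fin n × Fin m) * tensorR (typeAR q n) (typeAR q m) - (q ^ 2) • 1) *
      (flipMatrix k (Fin n × Fin m) * tensorR (typeAR q n) (typeAR q m) - (q⁻¹ ^ 2) • 1)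
      = 0 := by
  have hq0 : q ≠ 0 := hq.ne_zero
  let φ := reindexAlgEquiv k k (midSwap n m).symm
  have hPR : flipMatrix k (Fin n × Fin m) * tensorR (typeAR q n) (typeAR q m)
      = φ ((flipMatrix k (Fin n) * typeAR q n) ⊗ₖ (flipMatrix k (Fin m) * typeAR q m)) := by
    rw [flip_decomp, tensorR_decomp]
    show φ _ * φ _ = _
    rw [← _root_.map_mul, ← mul_kronecker_mul]
  have hA : ((flipMatrix k (Fin n) * typeAR q n) ⊗ₖ (1 : Matrix (Fin m × Fin m) (Fin m × Fin m) k))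
      * ((flipMatrix k (Fin n) * typeAR q n) ⊗ₖ 1)
      = (q - q⁻¹) • ((flipMatrix k (Fin n) * typeAR q n) ⊗ₖ 1) + 1 := by
    rw [← mul_kronecker_mul, hecke q hq0, one_mul, add_kronecker, smul_kronecker,
      one_kronecker_one]
  have hB : ((1 : Matrix (Fin n × Fin n) (Fin n × Fin n) k) ⊗ₖ (flipMatrix k (Fin m) * typeAR q m))
      * (1 ⊗ₖ (flipMatrix k (Fin m) * typeAR q m))
      = (q - q⁻¹) • ((1 : Matrix (Fin n × Fin n) (Fin n × Fin n) k)
          ⊗ₖ (flipMatrix k (Fin m) * typeAR q m)) + 1 := by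
    rw [← mul_kronecker_mul, hecke q hq0, one_mul, kronecker_add, kronecker_smul,
      one_kronecker_one]
  have hAB : ((flipMatrix k (Fin n) * typeAR q n) ⊗ₖ (1 : Matrix (Fin m × Fin m) (Fin m × Fin m) k))
      * ((1 : Matrix (Fin n × Fin n) (Fin n × Fin n) k) ⊗ₖ (flipMatrix k (Fin m) * typeAR q m))
      = ((1 : Matrix (Fin n × Fin n) (Fin n × Fin n) k) ⊗ₖ (flipMatrix k (Fin m) * typeAR q m))
      * ((flipMatrix k (Fin n) * typeAR q n) ⊗ₖ 1) := by
    rw [← mul_kronecker_mul, ← mul_kronecker_mul, mul_one, one_mul, mul_one, one_mul]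
  have hKey := cube _ _ (q - q⁻¹) (q ^ 2) (q⁻¹ ^ 2) (by field_simp) (by field_simp; ring)
    hAB hA hB
  rw [← mul_kronecker_mul, mul_one, one_mul] at hKey
  rw [hPR]
  calc (φ ((flipMatrix k (Fin n) * typeAR q n) ⊗ₖ (flipMatrix k (Fin m) * typeAR q m)) + 1)
        * (φ _ - (q ^ 2) • 1) * (φ _ - (q⁻¹ ^ 2) • 1)
      = φ (((flipMatrix k (Fin n) * typeAR q n) ⊗ₖ (flipMatrix k (Fin m) * typeAR q m) + 1)
          * ((flipMatrix k (Fin n) * typeAR q n) ⊗ₖ (flipMatrix k (Fin m) * typeAR q m)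
              - (q ^ 2) • 1)
          * ((flipMatrix k (Fin n) * typeAR q n) ⊗ₖ (flipMatrix k (Fin m) * typeAR q m)
              - (q⁻¹ ^ 2) • 1)) := by
        simp only [_root_.map_mul, map_add, map_sub, _root_.map_one, _root_.map_smul]
  _ = 0 := by rw [hKey, map_zero]
end

section
/- Fix integers n, m ≥ 2 and a unit q in a field k with q⁴ ≠ 1. Let R be the tensor R-matrix of R_q(n) and R_q(m), indexed by pairs from S = {1,…,n} × {1,…,m}, P the flip matrix on S, and R′ = R·P·R − (q² + q⁻²)·R + 2·P. Then in the braided vector algebra V(R′) the following relations hold: (a) e^{(i₁,i₂)} e^{(i₁,j₂)} = q · e^{(i₁,j₂)} e^{(i₁,i₂)} for all 1 ≤ i₁ ≤ n and 1 ≤ j₂ < i₂ ≤ m; (b) e^{(n,m)} e^{(n−1,m)} = q · e^{(n−1,m)} e^{(n,m)}. -/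
/-!
STATEMENT 11: relations in the braided vector algebra `V(R′)` for the grafting of
type A: (a) `e^{(i₁,i₂)} e^{(i₁,j₂)} = q e^{(i₁,j₂)} e^{(i₁,i₂)}` for `j₂ < i₂`;
(b) `e^{(n,m)} e^{(n−1,m)} = q e^{(n−1,m)} e^{(n,m)}`.
-/

open Matrix

/-- The defining relations of the braided vector algebra `V(R′)`:
`e^i e^j = Σ_{a,b} R′^{ji}_{ab} e^a e^b`. -/
inductive braidedRel {k S : Type*} [CommRing k] [Fintype S]
    (R' : Matrix (S × S) (S × S) k) :
    FreeAlgebra k S → FreeAlgebra k S → Prop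
  | rel (i j : S) : braidedRel R' (FreeAlgebra.ι k i * FreeAlgebra.ι k j)
      (∑ a : S, ∑ b : S, R' (j, i) (a, b) • (FreeAlgebra.ι k a * FreeAlgebra.ι k b))

/-- The braided vector algebra `V(R′)`: the free algebra on `{e^i : i ∈ S}` modulo
the two-sided ideal generated by `e^i e^j − Σ_{a,b} R′^{ji}_{ab} e^a e^b`. -/
abbrev BraidedVectorAlgebra {k : Type*} (S : Type*) [CommRing k] [Fintype S]
    (R' : Matrix (S × S) (S × S) k) : Type _ :=
  RingQuot (braidedRel R')

/-- The generator `e^i` of `V(R′)`. -/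
def gen {k S : Type*} [CommRing k] [Fintype S] (R' : Matrix (S × S) (S × S) k) (i : S) :
    BraidedVectorAlgebra S R' :=
  RingQuot.mkAlgHom k (braidedRel R') (FreeAlgebra.ι k i)

lemma typeAR_diag {k : Type*} [Field k] (q : k) {N : ℕ} (x : Fin N) (r : Fin N × Fin N) :
    typeAR q N (x, x) r = if (x, x) = r then q else 0 := by
  obtain ⟨u, v⟩ := r
  simp only [typeAR, Prod.mk.injEq, lt_irrefl, and_false, if_false, mul_zero, add_zero]
  split_ifs <;> first | ring1 | aesop

lemma typeAR_lt' {k : Type*} [Field k] (q : k) {N : ℕ} {x y : Fin N} (hxy : x < y)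
    (r : Fin N × Fin N) :
    typeAR q N (x, y) r = if (x, y) = r then 1 else if (y, x) = r then q - q⁻¹ else 0 := by
  obtain ⟨u, v⟩ := r
  have hne : x ≠ y := ne_of_lt hxy
  simp only [typeAR, Prod.mk.injEq, hxy, and_true, if_neg hne, one_mul]
  split_ifs <;> first | ring1 | aesop

lemma typeAR_gt' {k : Type*} [Field k] (q : k) {N : ℕ} {x y : Fin N} (hxy : y < x)
    (r : Fin N × Fin N) :
    typeAR q N (x, y) r = if (x, y) = r then 1 else 0 := by
  obtain ⟨u, v⟩ := r
  have hne : x ≠ y := (ne_of_lt hxy).symm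
  have hnlt : ¬ x < y := not_lt_of_gt hxy
  simp only [typeAR, Prod.mk.injEq, hnlt, and_false, if_false, mul_zero, add_zero,
    if_neg hne, one_mul]

lemma flip_apply {k S : Type*} [Semiring k] [DecidableEq S] (p t : S × S) :
    flipMatrix k S p t = if ((p.2, p.1) : S × S) = t then 1 else 0 := by
  obtain ⟨p1, p2⟩ := p; obtain ⟨t1, t2⟩ := t
  simp only [flipMatrix, Prod.mk.injEq]
  split_ifs <;> first | rfl | aesop

lemma mul_flip {k S : Type*} [CommRing k] [Fintype S] [DecidableEq S]
    (M : Matrix (S × S) (S × S) k) (r u : S × S) :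
    (M * flipMatrix k S) r u = M r (u.2, u.1) := by
  rw [Matrix.mul_apply, Finset.sum_eq_single (u.2, u.1)]
  · simp [flipMatrix]
  · intro v _ hv
    rw [flipMatrix, if_neg, mul_zero]
    rintro ⟨h1, h2⟩
    exact hv (Prod.ext h1 h2)
  · intro h; exact absurd (Finset.mem_univ _) h

-- tensor row lemmas, case (a)
lemma rowA1 {k : Type*} [Field k] (q : k) {n m : ℕ} (i₁ : Fin n) {i₂ j₂ : Fin m}
    (h : j₂ < i₂) (t : (Fin n × Fin m) × (Fin n × Fin m)) :
    tensorR (typeAR q n) (typeAR q m) ((i₁, j₂), (i₁, i₂)) t =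
      if (((i₁, j₂), (i₁, i₂)) : (Fin n × Fin m) × (Fin n × Fin m)) = t then q
      else if (((i₁, i₂), (i₁, j₂)) : (Fin n × Fin m) × (Fin n × Fin m)) = t
      then q * (q - q⁻¹) else 0 := by
  obtain ⟨⟨a, b⟩, ⟨c, d⟩⟩ := t
  have hne : j₂ ≠ i₂ := ne_of_lt h
  simp only [tensorR]
  rw [typeAR_diag, typeAR_lt' q h]
  simp only [Prod.mk.injEq]
  split_ifs <;> first | ring1 | aesop

lemma rowA2 {k : Type*} [Field k] (q : k) {n m : ℕ} (i₁ : Fin n) {i₂ j₂ : Fin m}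
    (h : j₂ < i₂) (t : (Fin n × Fin m) × (Fin n × Fin m)) :
    tensorR (typeAR q n) (typeAR q m) ((i₁, i₂), (i₁, j₂)) t =
      if (((i₁, i₂), (i₁, j₂)) : (Fin n × Fin m) × (Fin n × Fin m)) = t then q else 0 := by
  obtain ⟨⟨a, b⟩, ⟨c, d⟩⟩ := t
  simp only [tensorR]
  rw [typeAR_diag, typeAR_gt' q h]
  simp only [Prod.mk.injEq]
  split_ifs <;> first | ring1 | aesop

-- tensor row lemmas, case (b)
lemma rowB1 {k : Type*} [Field k] (q : k) {n m : ℕ} {a b : Fin n} (c : Fin m)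
    (h : a < b) (t : (Fin n × Fin m) × (Fin n × Fin m)) :
    tensorR (typeAR q n) (typeAR q m) ((a, c), (b, c)) t =
      if (((a, c), (b, c)) : (Fin n × Fin m) × (Fin n × Fin m)) = t then q
      else if (((b, c), (a, c)) : (Fin n × Fin m) × (Fin n × Fin m)) = t
      then q * (q - q⁻¹) else 0 := by
  obtain ⟨⟨x, y⟩, ⟨z, w⟩⟩ := t
  have hne : a ≠ b := ne_of_lt h
  simp only [tensorR]
  rw [typeAR_diag, typeAR_lt' q h]
  simp only [Prod.mk.injEq]
  split_ifs <;> first | ring1 | aesop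

lemma rowB2 {k : Type*} [Field k] (q : k) {n m : ℕ} {a b : Fin n} (c : Fin m)
    (h : a < b) (t : (Fin n × Fin m) × (Fin n × Fin m)) :
    tensorR (typeAR q n) (typeAR q m) ((b, c), (a, c)) t =
      if (((b, c), (a, c)) : (Fin n × Fin m) × (Fin n × Fin m)) = t then q else 0 := by
  obtain ⟨⟨x, y⟩, ⟨z, w⟩⟩ := t
  simp only [tensorR]
  rw [typeAR_diag, typeAR_gt' q h]
  simp only [Prod.mk.injEq]
  split_ifs <;> first | ring1 | aesop

-- the key computation of the R' row
lemma keyRow {k : Type*} [Field k] (q : k) (hq : q ≠ 0) {S : Type*} [Fintype S]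
    [DecidableEq S] (R : Matrix ((S × S)) ((S × S)) k) (i j : S) (hij : i ≠ j)
    (h1 : ∀ t, R (j, i) t = if ((j, i) : S × S) = t then q
        else if ((i, j) : S × S) = t then q * (q - q⁻¹) else 0)
    (h2 : ∀ t, R (i, j) t = if ((i, j) : S × S) = t then q else 0) (t : S × S) :
    (R * flipMatrix k S * R - (q ^ 2 + q⁻¹ ^ 2) • R + (2 : k) • flipMatrix k S) (j, i) t
      = if ((j, i) : S × S) = t then -(q + q⁻¹)
        else if ((i, j) : S × S) = t then q⁻¹ ^ 2 + 2 else 0 := by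
  have hRPR : (R * flipMatrix k S * R) (j, i) t
      = q * R (i, j) t + q * (q - q⁻¹) * R (j, i) t := by
    rw [Matrix.mul_apply]
    have key : ∀ u : S × S, (R * flipMatrix k S) (j, i) u * R u t
        = (if ((i, j) : S × S) = u then q * R u t else 0)
          + (if ((j, i) : S × S) = u then q * (q - q⁻¹) * R u t else 0) := by
      intro u
      rw [mul_flip, h1]
      obtain ⟨u1, u2⟩ := u
      simp only [Prod.mk.injEq]
      split_ifs <;> first | ring1 | aesop
    rw [Finset.sum_congr rfl fun u _ => key u, Finset.sum_add_distrib,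
      Finset.sum_ite_eq Finset.univ ((i, j) : S × S),
      Finset.sum_ite_eq Finset.univ ((j, i) : S × S)]
    simp
  rw [Matrix.add_apply, Matrix.sub_apply, Matrix.smul_apply, Matrix.smul_apply, hRPR,
    h1, h2, flip_apply, smul_eq_mul, smul_eq_mul]
  have hji : ¬ (((j, i) : S × S) = (i, j)) := by
    simp only [Prod.mk.injEq]; rintro ⟨rfl, -⟩; exact hij rfl
  obtain ⟨t1, t2⟩ := t
  split_ifs <;> first | (field_simp; ring1) | aesop


lemma gen_mul_eq {k S : Type*} [CommRing k] [Fintype S]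
    (R' : Matrix (S × S) (S × S) k) (i j : S) :
    gen R' i * gen R' j
      = ∑ a : S, ∑ b : S, R' (j, i) (a, b) • (gen R' a * gen R' b) := by
  have h := RingQuot.mkAlgHom_rel k (braidedRel.rel (R' := R') i j)
  simpa only [_root_.map_mul, map_sum, _root_.map_smul, gen] using h

lemma gen_rel {k S : Type*} [Field k] [Fintype S] [DecidableEq S] (q : k)
    (hq0 : q ≠ 0) (hq2 : q ^ 2 + 1 ≠ 0) (R' : Matrix (S × S) (S × S) k) (i j : S)
    (hij : i ≠ j)
    (h : ∀ t, R' (j, i) t = if ((j, i) : S × S) = t then -(q + q⁻¹)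
        else if ((i, j) : S × S) = t then q⁻¹ ^ 2 + 2 else 0) :
    gen R' i * gen R' j = q • (gen R' j * gen R' i) := by
  have hsum : (∑ a : S, ∑ b : S, R' (j, i) (a, b) • (gen R' a * gen R' b))
      = ∑ p : S × S, R' (j, i) p • (gen R' p.1 * gen R' p.2) := by
    rw [Fintype.sum_prod_type]
  have base : gen R' i * gen R' j
      = (-(q + q⁻¹)) • (gen R' j * gen R' i)
        + (q⁻¹ ^ 2 + 2) • (gen R' i * gen R' j) := by
    conv_lhs => rw [gen_mul_eq, hsum]
    have key : ∀ p : S × S, R' (j, i) p • (gen R' p.1 * gen R' p.2)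
        = (if ((j, i) : S × S) = p then (-(q + q⁻¹)) • (gen R' p.1 * gen R' p.2) else 0)
          + (if ((i, j) : S × S) = p then (q⁻¹ ^ 2 + 2) • (gen R' p.1 * gen R' p.2)
            else 0) := by
      intro p
      rw [h]
      obtain ⟨a, b⟩ := p
      split_ifs with hA hB hB
      · exfalso
        have hcon := hA.trans hB.symm
        rw [Prod.mk.injEq] at hcon
        exact hij hcon.2
      · simp
      · simp
      · simp
    rw [Finset.sum_congr rfl fun p _ => key p, Finset.sum_add_distrib,
      Finset.sum_ite_eq Finset.univ ((j, i) : S × S),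
      Finset.sum_ite_eq Finset.univ ((i, j) : S × S)]
    simp
  have hz : q⁻¹ ^ 2 + 1 ≠ 0 := by
    intro hcon
    apply hq2
    have h1 : (q ^ 2) * (q⁻¹ ^ 2 + 1) = q ^ 2 * 0 := by rw [hcon]
    field_simp at h1
    linear_combination h1
  have e1 : (q⁻¹ ^ 2 + 1) • (gen R' i * gen R' j)
      = (q + q⁻¹) • (gen R' j * gen R' i) := by
    calc (q⁻¹ ^ 2 + 1) • (gen R' i * gen R' j)
        = (q⁻¹ ^ 2 + 2) • (gen R' i * gen R' j) - (gen R' i * gen R' j) := by module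
      _ = (q⁻¹ ^ 2 + 2) • (gen R' i * gen R' j)
          - ((-(q + q⁻¹)) • (gen R' j * gen R' i)
            + (q⁻¹ ^ 2 + 2) • (gen R' i * gen R' j)) := by rw [← base]
      _ = (q + q⁻¹) • (gen R' j * gen R' i) := by module
  have e2 : ((q⁻¹ ^ 2 + 1)⁻¹ * (q⁻¹ ^ 2 + 1)) • (gen R' i * gen R' j)
      = ((q⁻¹ ^ 2 + 1)⁻¹ * (q + q⁻¹)) • (gen R' j * gen R' i) := by
    rw [mul_smul, mul_smul, e1]
  rw [inv_mul_cancel₀ hz, one_smul] at e2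
  have e3 : (q⁻¹ ^ 2 + 1)⁻¹ * (q + q⁻¹) = q := by
    have h4 : q + q⁻¹ = (q⁻¹ ^ 2 + 1) * q := by field_simp; ring
    rw [h4, inv_mul_cancel_left₀ hz]
  rwa [e3] at e2

theorem braidedVectorAlgebra_typeA_relations {k : Type*} [Field k] (q : k) (hq : IsUnit q)
    (hq4 : q ^ 4 ≠ 1) (n m : ℕ) (hn : 2 ≤ n) (hm : 2 ≤ m) :
    let R := tensorR (typeAR q n) (typeAR q m)
    let P := flipMatrix k (Fin n × Fin m)
    let R' := R * P * R - (q ^ 2 + q⁻¹ ^ 2) • R + (2 : k) • P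
    -- (a)
    (∀ (i₁ : Fin n) (i₂ j₂ : Fin m), j₂ < i₂ →
      gen R' (i₁, i₂) * gen R' (i₁, j₂) = q • (gen R' (i₁, j₂) * gen R' (i₁, i₂))) ∧
    -- (b)
    (gen R' (⟨n - 1, by omega⟩, ⟨m - 1, by omega⟩) * gen R' (⟨n - 2, by omega⟩, ⟨m - 1, by omega⟩)
      = q • (gen R' (⟨n - 2, by omega⟩, ⟨m - 1, by omega⟩) *
          gen R' (⟨n - 1, by omega⟩, ⟨m - 1, by omega⟩))) := by
  intro R P R'
  have hq0 : q ≠ 0 := hq.ne_zero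
  have hq2 : q ^ 2 + 1 ≠ 0 := by
    intro hc
    apply hq4
    have h1 : q ^ 2 = -1 := by linear_combination hc
    calc q ^ 4 = (q ^ 2) ^ 2 := by ring
      _ = 1 := by rw [h1]; ring
  constructor
  · intro i₁ i₂ j₂ hlt
    have hij : ((i₁, i₂) : Fin n × Fin m) ≠ (i₁, j₂) := by
      intro hc
      exact absurd (congrArg Prod.snd hc) (ne_of_gt hlt)
    exact gen_rel q hq0 hq2 R' (i₁, i₂) (i₁, j₂) hij
      (keyRow q hq0 R (i₁, i₂) (i₁, j₂) hij (rowA1 q i₁ hlt) (rowA2 q i₁ hlt))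
  · have hab : (⟨n - 2, by omega⟩ : Fin n) < ⟨n - 1, by omega⟩ := by
      rw [Fin.mk_lt_mk]; omega
    have hij : ((⟨n - 1, by omega⟩, ⟨m - 1, by omega⟩) : Fin n × Fin m)
        ≠ (⟨n - 2, by omega⟩, ⟨m - 1, by omega⟩) := by
      intro hc
      have h1 := congrArg Prod.fst hc
      rw [Fin.mk.injEq] at h1
      omega
    exact gen_rel q hq0 hq2 R' _ _ hij
      (keyRow q hq0 R _ _ hij (rowB1 q ⟨m - 1, by omega⟩ hab)
        (rowB2 q ⟨m - 1, by omega⟩ hab))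
end

section
/- Let k be a field and v ∈ k a unit with v⁶ ≠ 1 and v⁸ ≠ 1, and set q = v². Let R₀ be the tensor R-matrix of R_q(3) and R_v(2), indexed by pairs from S = {1,2,3} × {1,2}, P the flip matrix on S, R = v⁻¹·R₀, and R′ = R(PR)² + (q⁻¹ − q − q⁻²)·R(PR) + (q⁻¹ − 1 − q⁻³)·R + (q⁻² + 1)·P. Then the Majid pair condition (P·R + Id)(P·R′ − Id) = 0 holds. -/
/-!
STATEMENT 14: Let `v` be a unit in a field `k` with `v⁶ ≠ 1`, `v⁸ ≠ 1`, and `q = v²`.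
Let `R₀` be the tensor R-matrix of `R_q(3)` and `R_v(2)` on `S = {1,2,3} × {1,2}`,
`P` the flip matrix on `S`, `R = v⁻¹·R₀`, and
`R′ = R(PR)² + (q⁻¹ − q − q⁻²)·R(PR) + (q⁻¹ − 1 − q⁻³)·R + (q⁻² + 1)·P`.
Then the Majid pair condition `(P·R + Id)(P·R′ − Id) = 0` holds.
-/

open Matrix

open Kronecker

/-- The shuffle equivalence. -/
def shuffle (S₁ S₂ : Type*) : ((S₁ × S₂) × (S₁ × S₂)) ≃ ((S₁ × S₁) × (S₂ × S₂)) where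
  toFun p := ((p.1.1, p.2.1), (p.1.2, p.2.2))
  invFun p := ((p.1.1, p.2.1), (p.1.2, p.2.2))
  left_inv := by rintro ⟨⟨a, b⟩, ⟨c, d⟩⟩; rfl
  right_inv := by rintro ⟨⟨a, b⟩, ⟨c, d⟩⟩; rfl

lemma tensorR_eq_kronecker {k : Type*} [CommRing k] {S₁ S₂ : Type*}
    (R₁ : Matrix (S₁ × S₁) (S₁ × S₁) k) (R₂ : Matrix (S₂ × S₂) (S₂ × S₂) k) :
    tensorR R₁ R₂ = (R₁ ⊗ₖ R₂).submatrix (shuffle S₁ S₂) (shuffle S₁ S₂) := rfl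

lemma flip_eq_kronecker (k S₁ S₂ : Type*) [CommRing k] [DecidableEq S₁] [DecidableEq S₂] :
    flipMatrix k (S₁ × S₂)
      = (flipMatrix k S₁ ⊗ₖ flipMatrix k S₂).submatrix (shuffle S₁ S₂) (shuffle S₁ S₂) := by
  ext ⟨⟨a1, a2⟩, ⟨b1, b2⟩⟩ ⟨⟨c1, c2⟩, ⟨d1, d2⟩⟩
  simp [flipMatrix, shuffle, kroneckerMap_apply, Prod.ext_iff, ite_and, submatrix_apply]
  aesop

lemma flip_mul_flip (k S : Type*) [CommRing k] [DecidableEq S] [Fintype S] :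
    flipMatrix k S * flipMatrix k S = 1 := by
  ext ⟨i, j⟩ ⟨a, b⟩
  simp only [Matrix.mul_apply, flipMatrix, Matrix.one_apply, Fintype.sum_prod_type]
  rw [Finset.sum_eq_single j]
  · rw [Finset.sum_eq_single i] <;> aesop
  · intro x _ hx
    apply Finset.sum_eq_zero
    aesop
  · aesop

set_option maxHeartbeats 1000000 in
lemma hecke2 {k : Type*} [Field k] (q : k) (hq : q ≠ 0) :
    (flipMatrix k (Fin 2) * typeAR q 2) * (flipMatrix k (Fin 2) * typeAR q 2)
      = (q - q⁻¹) • (flipMatrix k (Fin 2) * typeAR q 2) + 1 := by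
  ext ⟨i, j⟩ ⟨a, b⟩
  simp only [Matrix.mul_apply, flipMatrix, typeAR, Matrix.one_apply, Matrix.add_apply,
    Matrix.smul_apply, Fintype.sum_prod_type, smul_eq_mul]
  fin_cases i <;> fin_cases j <;> fin_cases a <;> fin_cases b <;>
    simp [Fin.sum_univ_succ, Prod.ext_iff] <;> (try field_simp) <;> (try ring)

set_option maxHeartbeats 1000000 in
lemma hecke3 {k : Type*} [Field k] (q : k) (hq : q ≠ 0) :
    (flipMatrix k (Fin 3) * typeAR q 3) * (flipMatrix k (Fin 3) * typeAR q 3)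
      = (q - q⁻¹) • (flipMatrix k (Fin 3) * typeAR q 3) + 1 := by
  ext ⟨i, j⟩ ⟨a, b⟩
  simp only [Matrix.mul_apply, flipMatrix, typeAR, Matrix.one_apply, Matrix.add_apply,
    Matrix.smul_apply, Fintype.sum_prod_type, smul_eq_mul]
  fin_cases i <;> fin_cases j <;> fin_cases a <;> fin_cases b <;>
    simp [Fin.sum_univ_succ, Prod.ext_iff] <;> (try field_simp) <;> (try ring)

set_option maxHeartbeats 4000000 in
theorem tensorR_F4_majid_pair {k : Type*} [Field k] (v : k) (hv : IsUnit v)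
    (hv6 : v ^ 6 ≠ 1) (hv8 : v ^ 8 ≠ 1) :
    let q := v ^ 2
    let R₀ := tensorR (typeAR q 3) (typeAR v 2)
    let P := flipMatrix k (Fin 3 × Fin 2)
    let R := v⁻¹ • R₀
    let R' := R * (P * R) ^ 2 + (q⁻¹ - q - q⁻¹ ^ 2) • (R * (P * R)) +
      (q⁻¹ - 1 - q⁻¹ ^ 3) • R + (q⁻¹ ^ 2 + 1) • P
    (P * R + 1) * (P * R' - 1) = 0 := by
  intro q R₀ P R R'
  have hv0 : v ≠ 0 := hv.ne_zero
  have hqdef : q = v ^ 2 := rfl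
  have hq0 : q ≠ 0 := pow_ne_zero _ hv0
  set X₁ : Matrix (Fin 3 × Fin 3) (Fin 3 × Fin 3) k := flipMatrix k (Fin 3) * typeAR q 3 with hX₁
  set X₂ : Matrix (Fin 2 × Fin 2) (Fin 2 × Fin 2) k := flipMatrix k (Fin 2) * typeAR v 2 with hX₂
  set e := shuffle (Fin 3) (Fin 2) with he
  set A : Matrix _ _ k := (X₁ ⊗ₖ (1 : Matrix (Fin 2 × Fin 2) (Fin 2 × Fin 2) k)).submatrix e e with hA
  set B : Matrix _ _ k := ((1 : Matrix (Fin 3 × Fin 3) (Fin 3 × Fin 3) k) ⊗ₖ X₂).submatrix e e with hB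
  set α := q - q⁻¹ with hα
  set β := v - v⁻¹ with hβ
  -- the key product facts
  have hAB : A * B = (X₁ ⊗ₖ X₂).submatrix e e := by
    rw [hA, hB, submatrix_mul_equiv, ← mul_kronecker_mul, mul_one, one_mul]
  have hBA : B * A = (X₁ ⊗ₖ X₂).submatrix e e := by
    rw [hA, hB, submatrix_mul_equiv, ← mul_kronecker_mul, mul_one, one_mul]
  have hA2 : A * A = α • A + 1 := by
    rw [hA, submatrix_mul_equiv, ← mul_kronecker_mul, one_mul, hX₁, hecke3 q hq0]
    simp [add_kronecker, smul_kronecker, one_kronecker_one, Matrix.submatrix_add,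
      Matrix.submatrix_smul, Matrix.submatrix_one_equiv, hα, hX₁]
  have hB2 : B * B = β • B + 1 := by
    rw [hB, submatrix_mul_equiv, ← mul_kronecker_mul, one_mul, hX₂, hecke2 v hv0]
    simp [kronecker_add, kronecker_smul, one_kronecker_one, Matrix.submatrix_add,
      Matrix.submatrix_smul, Matrix.submatrix_one_equiv, hβ, hX₂]
  have hPR₀ : P * R₀ = (X₁ ⊗ₖ X₂).submatrix e e := by
    show flipMatrix k (Fin 3 × Fin 2) * tensorR (typeAR q 3) (typeAR v 2) = _
    rw [flip_eq_kronecker, tensorR_eq_kronecker, ← he, submatrix_mul_equiv, hX₁, hX₂,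
      mul_kronecker_mul]
  set K : Matrix _ _ k := (X₁ ⊗ₖ X₂).submatrix e e with hK
  -- derived relations
  have hcomm : B * A = A * B := by rw [hAB, hBA]
  have hKA : K * A = α • K + B := by
    rw [← hAB, mul_assoc, hcomm, ← mul_assoc, hA2, add_mul, smul_mul_assoc, one_mul, hAB]
  have hKB : K * B = β • K + A := by
    rw [← hAB, mul_assoc, hB2, mul_add, mul_smul_comm, mul_one, hAB]
  have hAK : A * K = α • K + B := by
    rw [← hAB, ← mul_assoc, hA2, add_mul, smul_mul_assoc, one_mul, hAB]
  have hBK : B * K = β • K + A := by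
    rw [← hAB, ← mul_assoc, hcomm, mul_assoc, hB2, mul_add, mul_smul_comm, mul_one, hAB]
  have hK2 : K * K = (α * β) • K + α • A + β • B + 1 := by
    calc K * K = K * A * B := by rw [mul_assoc, hAB]
    _ = (α • K + B) * B := by rw [hKA]
    _ = α • (K * B) + B * B := by rw [add_mul, smul_mul_assoc]
    _ = α • (β • K + A) + (β • B + 1) := by rw [hKB, hB2]
    _ = (α * β) • K + α • A + β • B + 1 := by rw [smul_add, smul_smul]; abel
  -- the goal in terms of K
  have hX : P * R = v⁻¹ • K := by
    show P * (v⁻¹ • R₀) = v⁻¹ • K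
    rw [Matrix.mul_smul, hPR₀]
  have hPP : P * P = 1 := flip_mul_flip k (Fin 3 × Fin 2)
  have hR'exp : P * R' = v⁻¹ • K * (v⁻¹ • K) * (v⁻¹ • K)
      + (q⁻¹ - q - q⁻¹ ^ 2) • (v⁻¹ • K * (v⁻¹ • K))
      + (q⁻¹ - 1 - q⁻¹ ^ 3) • (v⁻¹ • K) + (q⁻¹ ^ 2 + 1) • 1 := by
    show P * (R * (P * R) ^ 2 + (q⁻¹ - q - q⁻¹ ^ 2) • (R * (P * R)) +
      (q⁻¹ - 1 - q⁻¹ ^ 3) • R + (q⁻¹ ^ 2 + 1) • P) = _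
    simp only [mul_add, mul_smul_comm, smul_mul_assoc, pow_two, ← mul_assoc, hPP, hX, smul_smul,
      mul_one]
  show (P * R + 1) * (P * R' - 1) = 0
  rw [hR'exp, hX]
  simp only [mul_sub, sub_mul, mul_add, add_mul, mul_one, one_mul, smul_add, smul_sub, smul_smul,
    smul_mul_assoc, mul_smul_comm, mul_assoc, hK2, hKA, hKB, hAK, hBK, hA2, hB2, hAB, hBA]
  rw [hα, hβ]
  have hw : v * v⁻¹ = 1 := mul_inv_cancel₀ hv0
  match_scalars
  · simp only [hqdef]
    linear_combination (v⁻¹ + (-2) * v⁻¹ ^ 3 + (-2) * v⁻¹ ^ 5 + (-6) * v⁻¹ ^ 7 + (-2) * v⁻¹ ^ 9 + (-1) * v⁻¹ ^ 11 + v * v⁻¹ ^ 2 + (-1) * v * v⁻¹ ^ 4 + (6) * v * v⁻¹ ^ 6 + (-1) * v * v⁻¹ ^ 8 + v * v⁻¹ ^ 10 + (8) * v ^ 2 * v⁻¹ ^ 5 + (6) * v ^ 2 * v⁻¹ ^ 7 + (4) * v ^ 2 * v⁻¹ ^ 9 + v ^ 3 * v⁻¹ ^ 2 + (-9) * v ^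 3 * v⁻¹ ^ 4 + v ^ 3 * v⁻¹ ^ 6 + (-5) * v ^ 3 * v⁻¹ ^ 8 + (-5) * v ^ 4 * v⁻¹ ^ 5 + (-4) * v ^ 4 * v⁻¹ ^ 7 + v ^ 5 * v⁻¹ ^ 2 + (7) * v ^ 5 * v⁻¹ ^ 6 + v ^ 6 * v⁻¹ ^ 3 + (-3) * v ^ 7 * v⁻¹ ^ 4 + v ^ 8 * v⁻¹ ^ 3) * hw
  · simp only [hqdef]
    linear_combination ((5) * v⁻¹ ^ 6 + v⁻¹ ^ 8 + v⁻¹ ^ 10 + (-1) * v * v⁻¹ ^ 3 + (-1) * v * v⁻¹ ^ 5 + v * v⁻¹ ^ 7 + v ^ 2 * v⁻¹ ^ 2 + (-7) * v ^ 2 * v⁻¹ ^ 4 + (-2) * v ^ 2 * v⁻¹ ^ 6 + (-4) * v ^ 2 * v⁻¹ ^ 8 + (2) * v ^ 3 * v⁻¹ ^ 3 + (-1) * v ^ 3 * v⁻¹ ^ 5 + v ^ 3 * v⁻¹ ^ 7 + v ^ 4 * v⁻¹ ^ 2 + v ^ 4 * v⁻¹ ^ 4 + (5) * v ^ 4 *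 v⁻¹ ^ 6 + (-2) * v ^ 5 * v⁻¹ ^ 5 + (-2) * v ^ 6 * v⁻¹ ^ 4 + v ^ 7 * v⁻¹ ^ 3) * hw
  · simp only [hqdef]
    linear_combination ((-1) * v⁻¹ ^ 3 + (5) * v⁻¹ ^ 5 + (2) * v⁻¹ ^ 7 + v⁻¹ ^ 9 + v * v⁻¹ ^ 2 + (-5) * v * v⁻¹ ^ 4 + v * v⁻¹ ^ 6 + (-1) * v * v⁻¹ ^ 8 + (-1) * v ^ 2 * v⁻¹ ^ 3 + (-4) * v ^ 2 * v⁻¹ ^ 5 + (-3) * v ^ 2 * v⁻¹ ^ 7 + v ^ 3 * v⁻¹ ^ 2 + (4) * v ^ 3 * v⁻¹ ^ 6 + v ^ 4 * v⁻¹ ^ 3 + v ^ 4 * v⁻¹ ^ 5 + (-3) * v ^ 5 * v⁻¹ ^ 4 + v ^ 6 * v⁻¹ ^ 3) * hw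
  · simp only [hqdef]
    linear_combination (v⁻¹ ^ 2 + (-4) * v⁻¹ ^ 4 + (-1) * v⁻¹ ^ 6 + (-1) * v⁻¹ ^ 8 + v * v⁻¹ ^ 3 + (-1) * v * v⁻¹ ^ 5 + v ^ 2 * v⁻¹ ^ 2 + v ^ 2 * v⁻¹ ^ 4 + (3) * v ^ 2 * v⁻¹ ^ 6 + (-1) * v ^ 3 * v⁻¹ ^ 5 + (-2) * v ^ 4 * v⁻¹ ^ 4 + v ^ 5 * v⁻¹ ^ 3) * hw
end
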